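/- arXiv:2312.02904 — 4 statements merged into one kernel-verified Lean document; each statement's English description precedes it below -/
import Mathlib

section
/- Let $g : \mathbb{T}^d \setminus \{0\} \to \mathbb{R}$ satisfy $g(x) = |x|^{-s}$ (for $s>0$) or $g(x) = -\log|x|$ (for $s=0$) up to a smooth correction on $B_{1/4}(0)$, and be smooth away from $0$. Then there exists $C > 0$ such that $|x| |\nabla g(x)| \leq C(g(x) + C)$ for all $x \in \mathbb{T}^d \setminus \{0\}$. -/
open MeasureTheory Filter ENNReal RealInnerProductSpace Real
noncomputable section

/-- `d`-dimensional Euclidean space, whose quotient by `ℤ^d` is the torus. -/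
abbrev E (d : ℕ) := EuclideanSpace ℝ (Fin d)

/-- A lattice point of `ℤ^d ⊂ ℝ^d`. -/
def latt (d : ℕ) (k : Fin d → ℤ) : E d := WithLp.toLp 2 (fun i => (k i : ℝ))

/-- The fundamental domain `[-1/2,1/2)^d` of the torus. -/
def Box (d : ℕ) : Set (E d) := {x | ∀ i, x i ∈ Set.Ico (-(1/2) : ℝ) (1/2)}

/-- `ℤ^d`-periodicity: the function descends to the torus. -/
def IsPeriodic (d : ℕ) (f : E d → ℝ) : Prop :=
  ∀ (x : E d) (k : Fin d → ℤ), f (x + latt d k) = f x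

/-- `ℤ^d`-periodicity for vector fields. -/
def IsPeriodicV (d : ℕ) (f : E d → E d) : Prop :=
  ∀ (x : E d) (k : Fin d → ℤ), f (x + latt d k) = f x

/-- Fourier coefficient of a (periodic) function on the torus. -/
def fcoeff (d : ℕ) (f : E d → ℝ) (k : Fin d → ℤ) : ℂ :=
  ∫ x in Box d, (f x : ℂ) * Complex.exp (-(2 * π * Complex.I) * (∑ i, (k i : ℂ) * (x i : ℂ)))

/-- Fourier coefficient of a measure on the torus. -/
def fcoeffM (d : ℕ) (μ : Measure (E d)) (k : Fin d → ℤ) : ℂ :=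
  ∫ x, Complex.exp (-(2 * π * Complex.I) * (∑ i, (k i : ℂ) * (x i : ℂ))) ∂μ

/-- Squared homogeneous Sobolev norm `‖·‖_{Ḣ^α}²` computed from Fourier coefficients `c`. -/
def sobSqC (d : ℕ) (α : ℝ) (c : (Fin d → ℤ) → ℂ) : ℝ :=
  ∑' k : {k : Fin d → ℤ // k ≠ 0}, (2 * π * ‖latt d k.1‖) ^ (2 * α) * ‖c k.1‖ ^ 2

/-- Squared `Ḣ^α(𝕋^d)` norm of a function. -/
def sobSq (d : ℕ) (α : ℝ) (f : E d → ℝ) : ℝ := sobSqC d α (fcoeff d f)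

/-- `Ḣ^α(𝕋^d)` norm of a function. -/
def sobNorm (d : ℕ) (α : ℝ) (f : E d → ℝ) : ℝ := Real.sqrt (sobSq d α f)

/-- Squared `Ḣ^α(𝕋^d)` norm of a measure. -/
def sobSqM (d : ℕ) (α : ℝ) (μ : Measure (E d)) : ℝ := sobSqC d α (fcoeffM d μ)

/-- `Ḣ^α(𝕋^d)` norm of a measure. -/
def sobNormM (d : ℕ) (α : ℝ) (μ : Measure (E d)) : ℝ := Real.sqrt (sobSqM d α μ)

/-- `F = |∇|^α f` in the Fourier-multiplier sense on the torus. -/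
def IsFracPow (d : ℕ) (α : ℝ) (f F : E d → ℝ) : Prop :=
  (∀ k : Fin d → ℤ, k ≠ 0 →
      fcoeff d F k = (((2 * π * ‖latt d k‖) ^ α : ℝ) : ℂ) * fcoeff d f k) ∧
    fcoeff d F 0 = 0

/-- `F = |∇|^α f` for vector fields, componentwise. -/
def IsFracPowV (d : ℕ) (α : ℝ) (f F : E d → E d) : Prop :=
  ∀ i : Fin d, IsFracPow d α (fun x => f x i) (fun x => F x i)

/-- `F = |∇|^α μ` for a measure `μ` on the torus. -/
def IsFracPowM (d : ℕ) (α : ℝ) (μ : Measure (E d)) (F : E d → ℝ) : Prop :=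
  (∀ k : Fin d → ℤ, k ≠ 0 →
      fcoeff d F k = (((2 * π * ‖latt d k‖) ^ α : ℝ) : ℂ) * fcoeffM d μ k) ∧
    fcoeff d F 0 = 0

/-- `L^p` norm on the torus. -/
def lpBox (d : ℕ) (p : ℝ) (f : E d → ℝ) : ℝ := (∫ x in Box d, |f x| ^ p) ^ (1 / p)

/-- `L^p` norm on the torus, vector fields. -/
def lpBoxV (d : ℕ) (p : ℝ) (f : E d → E d) : ℝ := (∫ x in Box d, ‖f x‖ ^ p) ^ (1 / p)

/-- `‖∇ψ‖_{L^∞}` for a vector field. -/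
def gradSup (d : ℕ) (ψ : E d → E d) : ℝ := ⨆ x, ‖fderiv ℝ ψ x‖

/-- `‖∇ψ‖_{L^∞}` for a scalar function. -/
def gradSupS (d : ℕ) (ψ : E d → ℝ) : ℝ := ⨆ x, ‖fderiv ℝ ψ x‖

/-- The scaling constant `c_{d,s}` of the periodic Riesz potential. -/
def cds (d : ℕ) (s : ℝ) : ℝ :=
  if 0 < s then
    4 ^ (((d : ℝ) - s) / 2) * Real.Gamma (((d : ℝ) - s) / 2) * π ^ ((d : ℝ) / 2) / Real.Gamma (s / 2)
  else Real.Gamma ((d : ℝ) / 2) * (4 * π) ^ ((d : ℝ) / 2) / 2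

/-- `g` is the periodic Riesz potential of parameter `s ∈ [0, d-2)`: the zero-mean periodic
solution of `|∇|^{d-s} g = c_{d,s} (δ₀ - 1)`, characterized through its Fourier coefficients,
and smooth away from the lattice. -/
structure IsRieszPotential (d : ℕ) (s : ℝ) (g : E d → ℝ) : Prop where
  periodic : IsPeriodic d g
  smooth : ∀ x : E d, (∀ k, x ≠ latt d k) → ContDiffAt ℝ (⊤ : ℕ∞) g x
  mean : fcoeff d g 0 = 0
  four : ∀ k : Fin d → ℤ, k ≠ 0 →
    fcoeff d g k = ((cds d s * (2 * π * ‖latt d k‖) ^ (-((d : ℝ) - s)) : ℝ) : ℂ)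

/-- `g` equals the Euclidean Riesz kernel `|x|^{-s}` (resp. `-log|x|` for `s = 0`)
near the origin, up to a `C^∞` correction on `B(0,1/4)`. -/
def HasRieszSingularity (d : ℕ) (s : ℝ) (g : E d → ℝ) : Prop :=
  ∃ h : E d → ℝ, ContDiffOn ℝ (⊤ : ℕ∞) h (Metric.ball (0 : E d) (1/4)) ∧
    ∀ x ∈ Metric.ball (0 : E d) (1/4), x ≠ 0 →
      g x = (if 0 < s then ‖x‖ ^ (-s) else -Real.log ‖x‖) + h x

end

noncomputable section

lemma kernD (d : ℕ) (s : ℝ) (hs : 0 ≤ s) (x : E d) (hx : x ≠ 0) :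
    ∃ D : E d →L[ℝ] ℝ,
      HasFDerivAt (fun y : E d => if 0 < s then ‖y‖ ^ (-s) else -Real.log ‖y‖) D x ∧
      ‖x‖ * ‖D‖ ≤ s * (if 0 < s then ‖x‖ ^ (-s) else -Real.log ‖x‖) + 1 := by
  have hxn : (0:ℝ) < ‖x‖ := norm_pos_iff.mpr hx
  have hsq : HasFDerivAt (fun y : E d => ‖y‖ ^ 2) (2 • innerSL ℝ x) x :=
    (hasStrictFDerivAt_norm_sq x).hasFDerivAt
  have hT : ‖(2 • innerSL ℝ x : E d →L[ℝ] ℝ)‖ ≤ 2 * ‖x‖ := by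
    refine norm_nsmul_le.trans ?_
    rw [innerSL_apply_norm]
    norm_num
  have ht : (0:ℝ) < ‖x‖ ^ 2 := by positivity
  by_cases hp : 0 < s
  · have hfun : (fun y : E d => if 0 < s then ‖y‖ ^ (-s) else -Real.log ‖y‖)
        = fun y : E d => (‖y‖ ^ 2) ^ (-s/2) := by
      funext y
      rw [if_pos hp, ← Real.rpow_natCast ‖y‖ 2, ← Real.rpow_mul (norm_nonneg y)]
      congr 1; push_cast; ring
    have hd : HasFDerivAt (fun y : E d => (‖y‖ ^ 2) ^ (-s/2))
        ((-s/2 * (‖x‖ ^ 2) ^ (-s/2 - 1)) • (2 • innerSL ℝ x)) x :=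
      hsq.rpow_const (Or.inl (ne_of_gt ht))
    refine ⟨_, by rw [hfun]; exact hd, ?_⟩
    rw [if_pos hp]
    have hc : ‖(-s/2 * (‖x‖ ^ 2) ^ (-s/2 - 1))‖ = s/2 * (‖x‖ ^ 2) ^ (-s/2 - 1) := by
      rw [Real.norm_eq_abs, abs_mul, abs_of_pos (by positivity : (0:ℝ) < (‖x‖ ^ 2) ^ (-s/2 - 1)),
        abs_of_nonpos (by linarith : -s/2 ≤ 0)]
      ring
    have hDn : ‖(-s/2 * (‖x‖ ^ 2) ^ (-s/2 - 1)) • (2 • innerSL ℝ x : E d →L[ℝ] ℝ)‖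
        ≤ s/2 * (‖x‖ ^ 2) ^ (-s/2 - 1) * (2 * ‖x‖) := by
      rw [norm_smul (-s/2 * (‖x‖ ^ 2) ^ (-s/2 - 1)) (2 • innerSL ℝ x : E d →L[ℝ] ℝ), hc]
      exact mul_le_mul_of_nonneg_left hT (by positivity)
    have h2 : (‖x‖ ^ 2) ^ (-s/2 - 1) * ‖x‖ ^ 2 = (‖x‖ ^ 2) ^ (-s/2) := by
      nth_rewrite 2 [show (-s/2 : ℝ) = (-s/2 - 1) + 1 by ring]
      rw [Real.rpow_add ht, Real.rpow_one]
    have h3 : ((‖x‖ ^ 2 : ℝ)) ^ (-s/2 : ℝ) = ‖x‖ ^ (-s) := by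
      rw [← Real.rpow_natCast ‖x‖ 2, ← Real.rpow_mul (norm_nonneg x)]
      congr 1; push_cast; ring
    calc ‖x‖ * ‖(-s/2 * (‖x‖ ^ 2) ^ (-s/2 - 1)) • (2 • innerSL ℝ x : E d →L[ℝ] ℝ)‖
        ≤ ‖x‖ * (s/2 * (‖x‖ ^ 2) ^ (-s/2 - 1) * (2 * ‖x‖)) :=
          mul_le_mul_of_nonneg_left hDn (norm_nonneg x)
      _ = s * ((‖x‖ ^ 2) ^ (-s/2 - 1) * ‖x‖ ^ 2) := by ring
      _ = s * ‖x‖ ^ (-s) := by rw [h2, h3]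
      _ ≤ s * ‖x‖ ^ (-s) + 1 := by linarith
  · have hs0 : s = 0 := le_antisymm (not_lt.mp hp) hs
    have hfun : (fun y : E d => if 0 < s then ‖y‖ ^ (-s) else -Real.log ‖y‖)
        = fun y : E d => (-(1/2) : ℝ) * Real.log (‖y‖ ^ 2) := by
      funext y
      rw [if_neg hp, Real.log_pow]
      push_cast; ring
    have hd : HasFDerivAt (fun y : E d => Real.log (‖y‖ ^ 2)) ((‖x‖ ^ 2)⁻¹ • (2 • innerSL ℝ x)) x :=
      by have := (Real.hasDerivAt_log (ne_of_gt ht)).comp_hasFDerivAt x hsq; exact this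
    have hd2 := hd.const_mul (-(1/2) : ℝ)
    refine ⟨_, by rw [hfun]; exact hd2, ?_⟩
    rw [if_neg hp, hs0]
    have hDn : ‖(-(1/2) : ℝ) • ((‖x‖ ^ 2)⁻¹ • (2 • innerSL ℝ x : E d →L[ℝ] ℝ))‖
        ≤ (1/2) * ((‖x‖ ^ 2)⁻¹ * (2 * ‖x‖)) := by
      rw [norm_smul (-(1/2) : ℝ) ((‖x‖ ^ 2)⁻¹ • (2 • innerSL ℝ x) : E d →L[ℝ] ℝ),
        norm_smul ((‖x‖ ^ 2)⁻¹ : ℝ) (2 • innerSL ℝ x : E d →L[ℝ] ℝ),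
        Real.norm_eq_abs, Real.norm_eq_abs, abs_of_pos (by positivity : (0:ℝ) < (‖x‖ ^ 2)⁻¹),
        show |(-(1/2) : ℝ)| = 1/2 by norm_num]
      have := mul_le_mul_of_nonneg_left hT (by positivity : (0:ℝ) ≤ (‖x‖ ^ 2)⁻¹)
      nlinarith [this]
    have : ‖x‖ * ((1/2) * ((‖x‖ ^ 2)⁻¹ * (2 * ‖x‖))) = 1 := by
      field_simp
    have h6 := mul_le_mul_of_nonneg_left hDn (norm_nonneg x)
    rw [this] at h6
    calc ‖x‖ * ‖(-(1/2) : ℝ) • ((‖x‖ ^ 2)⁻¹ • (2 • innerSL ℝ x : E d →L[ℝ] ℝ))‖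
        ≤ 1 := h6
      _ ≤ 0 * (-Real.log ‖x‖) + 1 := by norm_num

/-- **Gradient bound for the Riesz potential.** If `g` is smooth away from `0` on the torus and
equals the Euclidean Riesz kernel near the origin up to a smooth correction, then there is
`C > 0` with `|x| |∇g(x)| ≤ C (g(x) + C)` for all `x ∈ 𝕋^d \ {0}` (represented by points of
the fundamental domain `[-1/2,1/2)^d`). -/
theorem stmt3 (d : ℕ) (s : ℝ) (hd : 3 ≤ d) (hs : 0 ≤ s) (hs' : s < (d : ℝ) - 2)
    (g : E d → ℝ)
    (hper : IsPeriodic d g)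
    (hsm : ∀ x : E d, (∀ k, x ≠ latt d k) → ContDiffAt ℝ (⊤ : ℕ∞) g x)
    (hsing : HasRieszSingularity d s g) :
    ∃ C > 0, ∀ x : E d, x ≠ 0 → x ∈ Box d →
      ‖x‖ * ‖fderiv ℝ g x‖ ≤ C * (g x + C) := by
  obtain ⟨h, hh, heq⟩ := hsing
  have hsub : Metric.closedBall (0:E d) (1/8) ⊆ Metric.ball (0:E d) (1/4) :=
    Metric.closedBall_subset_ball (by norm_num)
  obtain ⟨M1a, hM1a⟩ := (isCompact_closedBall (0:E d) (1/8)).exists_bound_of_continuousOn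
    (hh.continuousOn.mono hsub)
  obtain ⟨M1b, hM1b⟩ := (isCompact_closedBall (0:E d) (1/8)).exists_bound_of_continuousOn
    ((hh.continuousOn_fderiv_of_isOpen Metric.isOpen_ball (by simp)).mono hsub)
  set M1 : ℝ := |M1a| + |M1b| with hM1def
  have hM1nn : (0:ℝ) ≤ M1 := by positivity
  have hhb : ∀ y ∈ Metric.closedBall (0:E d) (1/8), |h y| ≤ M1 ∧ ‖fderiv ℝ h y‖ ≤ M1 := by
    intro y hy
    have h1 := hM1a y hy
    have h2 := hM1b y hy
    rw [Real.norm_eq_abs] at h1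
    constructor
    · have := le_abs_self M1a
      have := abs_nonneg M1b
      linarith
    · have := le_abs_self M1b
      have := abs_nonneg M1a
      linarith
  -- far region
  set Kf : Set (E d) := {x : E d | ∀ i, |x i| ≤ 1/2} ∩ {x : E d | 1/8 ≤ ‖x‖} with hKfdef
  have hKfclosed : IsClosed Kf := by
    refine IsClosed.inter ?_ (isClosed_le continuous_const continuous_norm)
    have : {x : E d | ∀ i, |x i| ≤ 1/2} = ⋂ i, {x : E d | |x i| ≤ 1/2} := by
      ext x; simp [Set.mem_iInter]
    rw [this]
    refine isClosed_iInter fun i => ?_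
    have hc : Continuous fun x : E d => |x i| := by
      have hproj : Continuous fun x : E d => x i := (EuclideanSpace.proj (𝕜 := ℝ) i).continuous
      exact hproj.abs
    exact isClosed_le hc continuous_const
  have hKfbdd : ∀ x ∈ Kf, ‖x‖ ≤ (d : ℝ) := by
    intro x hx
    rw [EuclideanSpace.norm_eq x]
    have hsum : (∑ i, ‖x i‖^2) ≤ (d:ℝ) := by
      calc ∑ i, ‖x i‖^2 ≤ ∑ _i : Fin d, (1:ℝ) := by
            refine Finset.sum_le_sum fun i _ => ?_
            have h1 := hx.1 i
            rw [Real.norm_eq_abs]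
            nlinarith [abs_nonneg (x i)]
        _ = d := by simp
    have hd3 : (3:ℝ) ≤ (d:ℝ) := by exact_mod_cast hd
    calc Real.sqrt (∑ i, ‖x i‖^2) ≤ Real.sqrt ((d:ℝ)^2) :=
          Real.sqrt_le_sqrt (by nlinarith)
      _ = (d:ℝ) := Real.sqrt_sq (by positivity)
  have hKfcomp : IsCompact Kf := Metric.isCompact_of_isClosed_isBounded hKfclosed
    (isBounded_iff_forall_norm_le.mpr ⟨d, hKfbdd⟩)
  have havoid : ∀ x ∈ Kf, ∀ k, x ≠ latt d k := by
    intro x hx k hxk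
    have hx0 : x = 0 := by
      ext i
      have h1 : x i = (k i : ℝ) := by rw [hxk]; rfl
      have h2 := hx.1 i
      rw [h1] at h2
      have hki : k i = 0 := by
        by_contra hne
        have : (1:ℝ) ≤ |(k i : ℝ)| := by
          rw [← Int.cast_abs]
          exact_mod_cast Int.one_le_abs hne
        linarith
      rw [h1, hki]
      simp
    have h3 := hx.2
    rw [hx0] at h3
    simp at h3
    norm_num at h3
  have hcont1 : ContinuousOn g Kf := fun x hx =>
    ((hsm x (havoid x hx)).continuousAt).continuousWithinAt
  have hcont2 : ContinuousOn (fun x => ‖x‖ * ‖fderiv ℝ g x‖) Kf := by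
    intro x hx
    have hfd : ContinuousAt (fderiv ℝ g) x :=
      ((hsm x (havoid x hx)).fderiv_right (m := (⊤ : ℕ∞)) (by simp)).continuousAt
    exact ((continuous_norm.continuousAt).mul hfd.norm).continuousWithinAt
  obtain ⟨M2a, hM2a⟩ := hKfcomp.exists_bound_of_continuousOn hcont1
  obtain ⟨M2b, hM2b⟩ := hKfcomp.exists_bound_of_continuousOn hcont2
  set M2 : ℝ := |M2a| + |M2b| with hM2def
  have hM2nn : (0:ℝ) ≤ M2 := by positivity
  refine ⟨M1 + M2 + s + 2, by linarith, ?_⟩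
  intro x hx0 hxB
  by_cases hxr : ‖x‖ < 1/8
  · -- near the singularity
    have hx4 : x ∈ Metric.ball (0:E d) (1/4) := by
      rw [Metric.mem_ball, dist_zero_right]; linarith
    have hx8 : x ∈ Metric.closedBall (0:E d) (1/8) := by
      rw [Metric.mem_closedBall, dist_zero_right]; linarith
    obtain ⟨D, hD, hDb⟩ := kernD d s hs x hx0
    have hdh : HasFDerivAt h (fderiv ℝ h x) x :=
      ((hh.contDiffAt (Metric.isOpen_ball.mem_nhds hx4)).differentiableAt (by simp)).hasFDerivAt
    have hev : g =ᶠ[nhds x] fun y => (if 0 < s then ‖y‖ ^ (-s) else -Real.log ‖y‖) + h y := by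
      have hUo : IsOpen (Metric.ball (0:E d) (1/4) \ {0}) :=
        Metric.isOpen_ball.sdiff isClosed_singleton
      exact Filter.eventuallyEq_of_mem (hUo.mem_nhds ⟨hx4, hx0⟩) fun y hy => heq y hy.1 hy.2
    have hfg : fderiv ℝ g x = D + fderiv ℝ h x := by
      rw [hev.fderiv_eq]
      exact (hD.add hdh).fderiv
    set A := (if 0 < s then ‖x‖ ^ (-s) else -Real.log ‖x‖) with hA
    have hA1 : (1:ℝ) ≤ A := by
      rw [hA]
      by_cases hp : 0 < s
      · rw [if_pos hp]
        have := Real.rpow_le_rpow_of_exponent_ge (norm_pos_iff.mpr hx0)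
          (by linarith [norm_nonneg x] : ‖x‖ ≤ 1) (by linarith : -s ≤ (0:ℝ))
        simpa using this
      · rw [if_neg hp]
        have h1 : Real.log ‖x‖ ≤ Real.log (1/8) :=
          Real.log_le_log (norm_pos_iff.mpr hx0) (by linarith)
        have h2 : Real.log (1/8 : ℝ) = -Real.log 8 := by rw [one_div, Real.log_inv]
        have h3 : (1:ℝ) ≤ Real.log 8 := by
          rw [Real.le_log_iff_exp_le (by norm_num)]
          have := Real.exp_one_lt_d9
          linarith
        linarith
    have hgx : g x = A + h x := heq x hx4 hx0
    have hhx := (hhb x hx8).1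
    have hhd := (hhb x hx8).2
    have hnb : ‖x‖ * ‖fderiv ℝ g x‖ ≤ s * A + 1 + M1 := by
      rw [hfg]
      calc ‖x‖ * ‖D + fderiv ℝ h x‖ ≤ ‖x‖ * (‖D‖ + ‖fderiv ℝ h x‖) :=
            mul_le_mul_of_nonneg_left (norm_add_le _ _) (norm_nonneg x)
        _ = ‖x‖ * ‖D‖ + ‖x‖ * ‖fderiv ℝ h x‖ := by ring
        _ ≤ (s * A + 1) + 1 * M1 := by
            refine add_le_add hDb ?_
            exact mul_le_mul (by linarith [norm_nonneg x] : ‖x‖ ≤ 1) hhd (norm_nonneg _)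
              zero_le_one
        _ = s * A + 1 + M1 := by ring
    have habs : -M1 ≤ h x := by
      have := (abs_le.mp hhx).1
      linarith
    have key : (0:ℝ) ≤ (M1 + M2 + 2) * (A - 1) :=
      mul_nonneg (by linarith) (by linarith)
    have h7 : s * A + 1 + M1 ≤ (M1 + M2 + s + 2) * A := by nlinarith [key]
    have h8 : (M1 + M2 + s + 2) * A ≤ (M1 + M2 + s + 2) * (g x + (M1 + M2 + s + 2)) := by
      refine mul_le_mul_of_nonneg_left ?_ (by linarith)
      rw [hgx]; linarith
    linarith
  · -- away from the singularity
    push_neg at hxr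
    have hxK : x ∈ Kf := by
      refine ⟨fun i => ?_, hxr⟩
      have hib := hxB i
      rw [Set.mem_Ico] at hib
      rw [abs_le]
      exact ⟨hib.1, hib.2.le⟩
    have h1 : ‖x‖ * ‖fderiv ℝ g x‖ ≤ M2 := by
      have hb := hM2b x hxK
      rw [Real.norm_eq_abs] at hb
      have := le_abs_self M2b
      have := abs_nonneg M2a
      calc ‖x‖ * ‖fderiv ℝ g x‖ ≤ |‖x‖ * ‖fderiv ℝ g x‖| := le_abs_self _
        _ ≤ M2b := hb
        _ ≤ M2 := by linarith
    have h2 : -M2 ≤ g x := by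
      have hb := hM2a x hxK
      rw [Real.norm_eq_abs] at hb
      have h3 : -M2a ≤ g x := (abs_le.mp hb).1
      have := le_abs_self M2a
      have := abs_nonneg M2b
      have := neg_abs_le M2a
      linarith
    have h8 : (M1 + M2 + s + 2) * (M1 + s + 2) ≤
        (M1 + M2 + s + 2) * (g x + (M1 + M2 + s + 2)) :=
      mul_le_mul_of_nonneg_left (by linarith) (by linarith)
    have h9 : M2 ≤ (M1 + M2 + s + 2) * (M1 + s + 2) := by
      nlinarith [mul_nonneg hM2nn (by linarith : (0:ℝ) ≤ M1 + s + 1),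
        mul_nonneg (by linarith : (0:ℝ) ≤ M1 + s + 2) (by linarith : (0:ℝ) ≤ M1 + s + 2)]
    calc ‖x‖ * ‖fderiv ℝ g x‖ ≤ M2 := h1
      _ ≤ (M1 + M2 + s + 2) * (M1 + s + 2) := h9
      _ ≤ (M1 + M2 + s + 2) * (g x + (M1 + M2 + s + 2)) := h8
end
end

section
/- Let $\psi : \mathbb{T}^d \to \mathbb{R}^d$ be Lipschitz, and let $g$ be the periodic Riesz potential with parameter $s \in [0, d-2)$. Then there exists $C > 0$ depending only on $d, s$ such that $|(\psi(x) - \psi(y)) \cdot \nabla g(x-y)| \leq C \|\nabla \psi\|_{L^\infty} (g(x-y) + C)$ for all distinct $x, y \in \mathbb{T}^d$. -/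
open MeasureTheory Filter ENNReal RealInnerProductSpace Real
noncomputable section

namespace Stmt4Aux
open scoped ComplexConjugate

lemma latt_add (d : ℕ) (k m : Fin d → ℤ) : latt d (k + m) = latt d k + latt d m := by
  ext i; show ((k i + m i : ℤ) : ℝ) = (k i : ℝ) + m i; push_cast; ring

lemma latt_neg (d : ℕ) (k : Fin d → ℤ) : latt d (-k) = - latt d k := by
  ext i; show ((-(k i) : ℤ) : ℝ) = -(k i : ℝ); push_cast; ring

/-- reduction to the fundamental domain -/
lemma exists_box_rep (d : ℕ) (z : E d) : ∃ k : Fin d → ℤ, z - latt d k ∈ Box d := by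
  refine ⟨fun i => ⌊z i + 1/2⌋, fun i => ?_⟩
  have h1 : (⌊z i + 1/2⌋ : ℝ) ≤ z i + 1/2 := Int.floor_le _
  have h2 : z i + 1/2 < ⌊z i + 1/2⌋ + 1 := Int.lt_floor_add_one _
  have : (z - latt d (fun i => ⌊z i + 1/2⌋)) i = z i - (⌊z i + 1/2⌋ : ℝ) := rfl
  rw [this]
  constructor <;> [linarith; linarith]

lemma norm_le_of_mem_cube {d : ℕ} {z : E d} (hz : ∀ i, |z i| ≤ 1/2) : ‖z‖ ≤ Real.sqrt d := by
  rw [EuclideanSpace.norm_eq]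
  apply Real.sqrt_le_sqrt
  calc ∑ i, ‖z i‖ ^ 2 ≤ ∑ i : Fin d, (1:ℝ) := by
        apply Finset.sum_le_sum
        intro i _
        have := hz i
        rw [Real.norm_eq_abs]; nlinarith [abs_nonneg (z i), sq_abs (z i)]
    _ = d := by simp
end Stmt4Aux
namespace Stmt4Aux

/-- the set of off-lattice points -/
def lattFree (d : ℕ) : Set (E d) := {x | ∀ k : Fin d → ℤ, x ≠ latt d k}

lemma dist_latt_ge {d : ℕ} (x : E d) (k : Fin d → ℤ) :
    ‖x - latt d (fun i => round (x i))‖ ≤ ‖x - latt d k‖ := by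
  rw [EuclideanSpace.norm_eq, EuclideanSpace.norm_eq]
  apply Real.sqrt_le_sqrt
  apply Finset.sum_le_sum
  intro i _
  have h1 : ((x - latt d (fun i => round (x i))) i) = x i - round (x i) := rfl
  have h2 : ((x - latt d k) i) = x i - k i := rfl
  rw [h1, h2, Real.norm_eq_abs, Real.norm_eq_abs]
  have hr : |x i - round (x i)| ≤ 1/2 := abs_sub_round (x i)
  rcases eq_or_ne (k i) (round (x i)) with h | h
  · rw [h]
  · have : (1 : ℝ) ≤ |(k i : ℝ) - round (x i)| := by
      rw [show ((k i : ℝ) - round (x i)) = ((k i - round (x i) : ℤ) : ℝ) by push_cast; ring]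
      rw [← Int.cast_abs]
      exact_mod_cast Int.one_le_abs (sub_ne_zero.mpr h)
    have h3 : 1/2 ≤ |x i - k i| := by
      have htri : |(k i : ℝ) - round (x i)| ≤ |(k i : ℝ) - x i| + |x i - round (x i)| :=
        abs_sub_le _ _ _
      have h4 : |(k i : ℝ) - x i| = |x i - k i| := abs_sub_comm _ _
      linarith
    nlinarith [abs_nonneg (x i - round (x i)), abs_nonneg (x i - (k i:ℝ))]

lemma isOpen_lattFree (d : ℕ) : IsOpen (lattFree d) := by
  rw [Metric.isOpen_iff]
  intro x hx
  set r := ‖x - latt d (fun i => round (x i))‖ with hr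
  have hrpos : 0 < r := by
    rw [hr, norm_pos_iff, sub_ne_zero]
    exact hx _
  refine ⟨r, hrpos, fun y hy k hyk => ?_⟩
  subst hyk
  rw [Metric.mem_ball, dist_eq_norm] at hy
  have h2 := dist_latt_ge x k
  have h3 : ‖latt d k - x‖ = ‖x - latt d k‖ := norm_sub_rev _ _
  linarith

/-- the closed unit cube -/
def cube (d : ℕ) : Set (E d) := {x | ∀ i, |x i| ≤ 1/2}

lemma box_subset_cube (d : ℕ) : Box d ⊆ cube d := by
  intro x hx i
  have := hx i
  rw [Set.mem_Ico] at this
  rw [abs_le]; constructor <;> linarith [this.1, this.2]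

lemma isCompact_cube (d : ℕ) : IsCompact (cube d) := by
  have hclosed : IsClosed (cube d) := by
    have : cube d = ⋂ i, (fun x : E d => x i) ⁻¹' {t | |t| ≤ 1/2} := by
      ext x; simp [cube, Set.mem_iInter]
    rw [this]
    apply isClosed_iInter
    intro i
    have hc : Continuous fun x : E d => x i := (EuclideanSpace.proj (𝕜 := ℝ) i).continuous
    exact IsClosed.preimage hc (isClosed_le (by continuity) continuous_const)
  exact IsCompact.of_isClosed_subset (isCompact_closedBall 0 (Real.sqrt d)) hclosed
    (fun x hx => by simpa [Metric.mem_closedBall, dist_eq_norm] using norm_le_of_mem_cube hx)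

lemma cube_lattice {d : ℕ} {k : Fin d → ℤ} (h : latt d k ∈ cube d) : k = 0 := by
  funext i
  have := h i
  have h2 : |(k i : ℝ)| ≤ 1/2 := this
  have : (k i : ℤ) = 0 := by
    by_contra hne
    have : (1:ℝ) ≤ |(k i : ℝ)| := by
      rw [← Int.cast_abs]; exact_mod_cast Int.one_le_abs hne
    linarith
  exact this

lemma fderiv_shift {d : ℕ} (g : E d → ℝ) (hper : IsPeriodic d g) (z : E d) (k : Fin d → ℤ)
    (hdiff : DifferentiableAt ℝ g (z + latt d k)) :
    fderiv ℝ g z = fderiv ℝ g (z + latt d k) := by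
  have hcomp : fderiv ℝ (g ∘ fun w : E d => w + latt d k) z
      = (fderiv ℝ g (z + latt d k)).comp (fderiv ℝ (fun w : E d => w + latt d k) z) :=
    fderiv_comp z hdiff (differentiable_id.add_const _ |>.differentiableAt)
  have hid : fderiv ℝ (fun w : E d => w + latt d k) z = ContinuousLinearMap.id ℝ (E d) := by
    rw [fderiv_add_const]; exact fderiv_id
  have hfun : (g ∘ fun w : E d => w + latt d k) = g := by
    funext w; exact hper w k
  rw [hfun, hid, ContinuousLinearMap.comp_id] at hcomp
  exact hcomp

lemma gradient_shift {d : ℕ} (g : E d → ℝ) (hper : IsPeriodic d g) (z : E d) (k : Fin d → ℤ)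
    (hdiff : DifferentiableAt ℝ g (z + latt d k)) :
    gradient g z = gradient g (z + latt d k) := by
  unfold gradient
  rw [fderiv_shift g hper z k hdiff]

lemma norm_gradient_eq {d : ℕ} (g : E d → ℝ) (z : E d) :
    ‖gradient g z‖ = ‖fderiv ℝ g z‖ := by
  unfold gradient
  exact LinearIsometryEquiv.norm_map _ _

end Stmt4Aux
namespace Stmt4Aux
open scoped ComplexConjugate

/-- the character functions -/
def eChar (d : ℕ) (k : Fin d → ℤ) (x : E d) : ℂ :=
  Complex.exp (-(2 * π * Complex.I) * (∑ i, (k i : ℂ) * (x i : ℂ)))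

lemma fcoeff_eq (d : ℕ) (f : E d → ℝ) (k : Fin d → ℤ) :
    fcoeff d f k = ∫ x in Box d, (f x : ℂ) * eChar d k x := rfl

lemma eChar_eq (d : ℕ) (k : Fin d → ℤ) (x : E d) :
    eChar d k x = Complex.exp (((-(2 * π * (∑ i, (k i : ℝ) * x i)) : ℝ) : ℂ) * Complex.I) := by
  unfold eChar
  congr 1
  push_cast
  ring

lemma norm_eChar (d : ℕ) (k : Fin d → ℤ) (x : E d) : ‖eChar d k x‖ = 1 := by
  rw [eChar_eq]
  exact Complex.norm_exp_ofReal_mul_I _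

lemma eChar_mul (d : ℕ) (k l : Fin d → ℤ) (x : E d) :
    eChar d k x * eChar d l x = eChar d (k + l) x := by
  unfold eChar
  rw [← Complex.exp_add]
  congr 1
  have : ∑ i, ((k + l) i : ℂ) * (x i : ℂ) = ∑ i, ((k i : ℂ) * x i + (l i : ℂ) * x i) := by
    apply Finset.sum_congr rfl
    intro i _
    have : ((k + l) i : ℤ) = k i + l i := rfl
    rw [this]; push_cast; ring
  rw [this, Finset.sum_add_distrib]
  ring

lemma eChar_zero (d : ℕ) (x : E d) : eChar d 0 x = 1 := by
  unfold eChar; simp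

lemma continuous_eChar (d : ℕ) (k : Fin d → ℤ) : Continuous (eChar d k) := by
  unfold eChar
  exact Complex.continuous_exp.comp (by
    apply Continuous.mul continuous_const
    apply continuous_finset_sum
    intro i _
    exact continuous_const.mul (Complex.continuous_ofReal.comp ((EuclideanSpace.proj (𝕜 := ℝ) i).continuous)))

lemma measurableSet_box (d : ℕ) : MeasurableSet (Box d) := by
  have : Box d = ⋂ i, (fun x : E d => x i) ⁻¹' (Set.Ico (-(1/2) : ℝ) (1/2)) := by
    ext x; simp [Box, Set.mem_iInter]
  rw [this]
  exact MeasurableSet.iInter fun i =>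
    ((EuclideanSpace.proj (𝕜 := ℝ) i).continuous.measurable) measurableSet_Ico

lemma integrableOn_box {d : ℕ} {F : E d → ℂ} (hF : Continuous F) :
    IntegrableOn F (Box d) := by
  exact (hF.continuousOn.integrableOn_compact (isCompact_cube d)).mono_set (box_subset_cube d)

lemma integrableOn_box_real {d : ℕ} {F : E d → ℝ} (hF : Continuous F) :
    IntegrableOn F (Box d) := by
  exact (hF.continuousOn.integrableOn_compact (isCompact_cube d)).mono_set (box_subset_cube d)

lemma measure_singleton_zero (d : ℕ) (hd : 0 < d) (x : E d) :
    (volume : Measure (E d)) {x} = 0 := by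
  haveI : Nontrivial (E d) := by
    refine ⟨EuclideanSpace.single ⟨0, hd⟩ 1, 0, fun h => ?_⟩
    have := congrArg (fun v : E d => v ⟨0, hd⟩) h
    simp [EuclideanSpace.single_apply] at this
  exact measure_singleton x

lemma cds_pos {d : ℕ} {s : ℝ} (hs : 0 ≤ s) (hs' : s < (d : ℝ) - 2) : 0 < cds d s := by
  unfold cds
  split_ifs with h
  · apply div_pos
    · apply _root_.mul_pos
      apply _root_.mul_pos
      · exact Real.rpow_pos_of_pos (by norm_num) _
      · exact Real.Gamma_pos_of_pos (by linarith)
      · exact Real.rpow_pos_of_pos Real.pi_pos _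
    · exact Real.Gamma_pos_of_pos (by linarith)
  · have hd2 : (0:ℝ) < (d:ℝ)/2 := by linarith
    apply div_pos
    · apply _root_.mul_pos
      · exact Real.Gamma_pos_of_pos hd2
      · exact Real.rpow_pos_of_pos (by positivity) _
    · norm_num

end Stmt4Aux
namespace Stmt4Aux

lemma riesz_integrable {d : ℕ} {s : ℝ} (hd : 3 ≤ d) (hs : 0 ≤ s) (hs' : s < (d:ℝ) - 2)
    {g : E d → ℝ} (hg : IsRieszPotential d s g) :
    ∀ k : Fin d → ℤ, IntegrableOn (fun x => (g x : ℂ) * eChar d k x) (Box d) := by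
  have hdpos : 0 < d := by omega
  haveI : NeZero d := ⟨by omega⟩
  set k₀ : Fin d → ℤ := fun _ => 1 with hk₀
  have hk₀ne : k₀ ≠ 0 := by
    intro h
    have := congrFun h ⟨0, hdpos⟩
    simp [hk₀] at this
  have hlatpos : 0 < ‖latt d k₀‖ := by
    rw [norm_pos_iff]
    intro h
    have := congrArg (fun v : E d => v ⟨0, hdpos⟩) h
    simp [latt, hk₀] at this
  have hcne : fcoeff d g k₀ ≠ 0 := by
    rw [hg.four k₀ hk₀ne]
    have h1 : 0 < cds d s := cds_pos hs hs'
    have h2 : (0:ℝ) < (2 * π * ‖latt d k₀‖) ^ (-((d : ℝ) - s)) :=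
      Real.rpow_pos_of_pos (by positivity) _
    exact_mod_cast ne_of_gt (by positivity : (0:ℝ) < cds d s * (2 * π * ‖latt d k₀‖) ^ (-((d : ℝ) - s)))
  have h0 : IntegrableOn (fun x => (g x : ℂ) * eChar d k₀ x) (Box d) := by
    by_contra hni
    exact hcne (by rw [fcoeff_eq]; exact integral_undef hni)
  -- a.e. strong measurability of x ↦ (g x : ℂ) on the box
  have haesm : AEStronglyMeasurable (fun x => (g x : ℂ)) (volume.restrict (Box d)) := by
    have : (fun x : E d => (g x : ℂ))
        = fun x => ((g x : ℂ) * eChar d k₀ x) * eChar d (-k₀) x := by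
      funext x
      rw [mul_assoc, eChar_mul, add_neg_cancel, eChar_zero, mul_one]
    rw [this]
    exact h0.aestronglyMeasurable.mul (continuous_eChar d (-k₀)).aestronglyMeasurable
  have hgnorm : IntegrableOn (fun x => |g x|) (Box d) := by
    have heq : (fun x => ‖(g x : ℂ) * eChar d k₀ x‖) = fun x => |g x| := by
      funext x
      rw [norm_mul, norm_eChar, mul_one, Complex.norm_real, Real.norm_eq_abs]
    have := h0.norm
    rwa [heq] at this
  intro k
  refine Integrable.mono' hgnorm (haesm.mul (continuous_eChar d k).aestronglyMeasurable)
    (Filter.Eventually.of_forall fun x => ?_)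
  rw [norm_mul, norm_eChar, mul_one, Complex.norm_real, Real.norm_eq_abs]

lemma fcoeff_diff {d : ℕ} {g1 g2 v : E d → ℝ} (hd : 0 < d)
    (h1 : ∀ k : Fin d → ℤ, IntegrableOn (fun x => (g1 x : ℂ) * eChar d k x) (Box d))
    (h2 : ∀ k : Fin d → ℤ, IntegrableOn (fun x => (g2 x : ℂ) * eChar d k x) (Box d))
    (hv : ∀ x ∈ Box d, x ≠ 0 → v x = g1 x - g2 x) (k : Fin d → ℤ) :
    fcoeff d v k = fcoeff d g1 k - fcoeff d g2 k := by
  rw [fcoeff_eq, fcoeff_eq, fcoeff_eq, ← integral_sub (h1 k) (h2 k)]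
  apply setIntegral_congr_ae (measurableSet_box d)
  have hnull : (volume : Measure (E d)) {(0 : E d)} = 0 := measure_singleton_zero d hd 0
  have h0ae : ∀ᵐ x ∂(volume : Measure (E d)), x ≠ (0 : E d) := by
    rw [MeasureTheory.ae_iff]
    simpa using hnull
  filter_upwards [h0ae] with x hx hxbox
  rw [hv x hxbox hx]
  push_cast
  ring

end Stmt4Aux
namespace Stmt4Aux
open scoped ComplexConjugate
open Submodule in
instance : Fact ((0:ℝ) < 1) := ⟨one_pos⟩

/-- The `d`-torus as a product of circles. -/
abbrev XT (d : ℕ) := Fin d → AddCircle (1 : ℝ)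

/-- Projection from Euclidean space to the torus. -/
def projT (d : ℕ) (x : E d) : XT d := fun i => (x i : AddCircle (1:ℝ))

lemma continuous_projT (d : ℕ) : Continuous (projT d) := by
  apply continuous_pi
  intro i
  exact (QuotientAddGroup.isOpenQuotientMap_mk.continuous).comp (EuclideanSpace.proj (𝕜 := ℝ) i).continuous

lemma isQuotientMap_projT (d : ℕ) : Topology.IsQuotientMap (projT d) := by
  have h1 : IsOpenQuotientMap (Pi.map fun (i : Fin d) (t : ℝ) => (t : AddCircle (1:ℝ))) :=
    IsOpenQuotientMap.piMap fun i => QuotientAddGroup.isOpenQuotientMap_mk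
  have h2 : Topology.IsQuotientMap (⇑(EuclideanSpace.equiv (Fin d) ℝ)) :=
    (EuclideanSpace.equiv (Fin d) ℝ).toHomeomorph.isQuotientMap
  have : projT d = (Pi.map fun (i : Fin d) (t : ℝ) => (t : AddCircle (1:ℝ))) ∘
      ⇑(EuclideanSpace.equiv (Fin d) ℝ) := rfl
  rw [this]
  exact h1.isQuotientMap.comp h2

/-- Monomial characters on the torus. -/
def charX (d : ℕ) (k : Fin d → ℤ) : C(XT d, ℂ) :=
  ⟨fun ξ => ∏ i, fourier (k i) (ξ i), by
    apply continuous_finset_prod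
    intro i _
    exact (map_continuous (fourier (k i))).comp (continuous_apply i)⟩

lemma charX_apply (d : ℕ) (k : Fin d → ℤ) (ξ : XT d) :
    charX d k ξ = ∏ i, fourier (k i) (ξ i) := rfl

lemma charX_zero (d : ℕ) : charX d 0 = 1 := by
  ext ξ
  rw [charX_apply]
  simp [fourier_zero]

lemma charX_mul (d : ℕ) (k l : Fin d → ℤ) : charX d k * charX d l = charX d (k + l) := by
  ext ξ
  simp only [ContinuousMap.mul_apply, charX_apply, ← Finset.prod_mul_distrib]
  apply Finset.prod_congr rfl
  intro i _
  rw [show (k + l) i = k i + l i from rfl, fourier_add]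

lemma charX_star (d : ℕ) (k : Fin d → ℤ) : star (charX d k) = charX d (-k) := by
  ext ξ
  simp only [ContinuousMap.star_apply, charX_apply]
  rw [star_prod]
  apply Finset.prod_congr rfl
  intro i _
  rw [show (-k) i = -(k i) from rfl, fourier_neg, starRingEnd_apply]

lemma charX_proj (d : ℕ) (k : Fin d → ℤ) (x : E d) :
    charX d k (projT d x) = eChar d (-k) x := by
  rw [charX_apply]
  unfold eChar projT
  have : ∀ i : Fin d, fourier (k i) ((x i : AddCircle (1:ℝ)))
      = Complex.exp (2 * π * Complex.I * (k i) * (x i) / (1:ℝ)) := fun i => fourier_coe_apply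
  rw [Finset.prod_congr rfl (fun i _ => this i), ← Complex.exp_sum]
  congr 1
  rw [Finset.mul_sum]
  apply Finset.sum_congr rfl
  intro i _
  rw [show (-k) i = -(k i) from rfl]
  push_cast
  ring

/-- The star subalgebra generated by the characters. -/
def charSubalgebra (d : ℕ) : StarSubalgebra ℂ C(XT d, ℂ) where
  toSubalgebra := Algebra.adjoin ℂ (Set.range (charX d))
  star_mem' := by
    show Algebra.adjoin ℂ (Set.range (charX d)) ≤ star (Algebra.adjoin ℂ (Set.range (charX d)))
    refine Algebra.adjoin_le ?_
    rintro - ⟨k, rfl⟩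
    exact Algebra.subset_adjoin ⟨-k, (charX_star d k).symm⟩

lemma charSubalgebra_coe (d : ℕ) :
    Subalgebra.toSubmodule (charSubalgebra d).toSubalgebra
      = Submodule.span ℂ (Set.range (charX d)) := by
  apply Algebra.adjoin_eq_span_of_subset
  refine Set.Subset.trans ?_ Submodule.subset_span
  intro x hx
  refine Submonoid.closure_induction (fun _ => id) ⟨0, charX_zero d⟩ ?_ hx
  · rintro - - - - ⟨m, rfl⟩ ⟨n, rfl⟩
    exact ⟨m + n, (charX_mul d m n).symm⟩

lemma charSubalgebra_separates (d : ℕ) : (charSubalgebra d).SeparatesPoints := by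
  intro ξ η hne
  obtain ⟨i, hi⟩ : ∃ i, ξ i ≠ η i := by
    by_contra h
    push_neg at h
    exact hne (funext h)
  refine ⟨_, ⟨charX d (Pi.single i 1), Algebra.subset_adjoin ⟨Pi.single i 1, rfl⟩, rfl⟩, ?_⟩
  have hval : ∀ ζ : XT d, charX d (Pi.single i 1) ζ = fourier 1 (ζ i) := by
    intro ζ
    rw [charX_apply]
    rw [Finset.prod_eq_single i (fun j _ hj => by rw [Pi.single_eq_of_ne hj]; exact fourier_zero)
      (fun h => absurd (Finset.mem_univ i) h)]
    rw [Pi.single_eq_same]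
  dsimp only
  rw [hval, hval]
  intro h
  rw [fourier_one, fourier_one] at h
  rw [Circle.coe_inj] at h
  exact hi (AddCircle.injective_toCircle one_ne_zero h)

lemma charSubalgebra_closure_eq_top (d : ℕ) : (charSubalgebra d).topologicalClosure = ⊤ :=
  ContinuousMap.starSubalgebra_topologicalClosure_eq_top_of_separatesPoints _
    (charSubalgebra_separates d)

end Stmt4Aux
namespace Stmt4Aux
open scoped ComplexConjugate
open Topology

/-- Lift of a periodic function to the torus. -/
def liftT (d : ℕ) (v : E d → ℝ) : XT d → ℝ :=
  fun ξ => v (WithLp.toLp 2 (fun i => ((AddCircle.equivIco 1 0 (ξ i)) : ℝ)))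

lemma liftT_proj {d : ℕ} {v : E d → ℝ} (hper : IsPeriodic d v) (x : E d) :
    liftT d v (projT d x) = v x := by
  unfold liftT projT
  have hrep : WithLp.toLp 2 (fun i => ((AddCircle.equivIco 1 0 ((x i : AddCircle (1:ℝ)))) : ℝ))
      = x + latt d (fun i => -⌊x i⌋) := by
    ext i
    have h1 : ((AddCircle.equivIco 1 0 ((x i : AddCircle (1:ℝ)))) : ℝ)
        = Int.fract (x i / 1) * 1 := AddCircle.coe_equivIco_mk_apply (1:ℝ) (x i)
    have h2 : (x + latt d (fun i => -⌊x i⌋)) i = x i + (-⌊x i⌋ : ℤ) := rfl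
    rw [WithLp.ofLp_toLp, h1, h2, div_one, mul_one, Int.fract]
    push_cast
    ring
  rw [hrep, hper x _]

lemma continuous_liftT {d : ℕ} {v : E d → ℝ} (hv : Continuous v) (hper : IsPeriodic d v) :
    Continuous (liftT d v) := by
  rw [(isQuotientMap_projT d).continuous_iff]
  have : liftT d v ∘ projT d = v := funext fun x => liftT_proj hper x
  rw [this]
  exact hv

theorem zero_of_fcoeff_zero {d : ℕ} (hd : 0 < d) {v : E d → ℝ} (hv : Continuous v)
    (hper : IsPeriodic d v) (hf : ∀ k, fcoeff d v k = 0) : ∀ x, v x = 0 := by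
  classical
  -- the lifted function, as a continuous map into ℂ
  set V : C(XT d, ℂ) :=
    ⟨fun ξ => (liftT d v ξ : ℂ), Complex.continuous_ofReal.comp (continuous_liftT hv hper)⟩ with hV
  have hVproj : ∀ x : E d, V (projT d x) = (v x : ℂ) := by
    intro x
    show ((liftT d v (projT d x) : ℝ) : ℂ) = _
    rw [liftT_proj hper x]
  -- integrability of products
  have hint : ∀ f : C(XT d, ℂ), IntegrableOn (fun x => (v x : ℂ) * f (projT d x)) (Box d) :=
    fun f => integrableOn_box ((Complex.continuous_ofReal.comp hv).mul
      (f.continuous.comp (continuous_projT d)))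
  -- the integral against everything in the span of characters vanishes
  have hQ : ∀ f ∈ Submodule.span ℂ (Set.range (charX d)),
      (∫ x in Box d, (v x : ℂ) * f (projT d x)) = 0 := by
    intro f hmem
    induction hmem using Submodule.span_induction with
    | mem f hfm =>
      obtain ⟨k, rfl⟩ := hfm
      have : (∫ x in Box d, (v x : ℂ) * (charX d k) (projT d x))
          = ∫ x in Box d, (v x : ℂ) * eChar d (-k) x := by
        apply setIntegral_congr_ae (measurableSet_box d)
        filter_upwards with x _
        rw [charX_proj]
      rw [this, ← fcoeff_eq]
      exact hf (-k)
    | zero => simp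
    | add f g hfm hgm hf' hg' =>
      have : (fun x => (v x : ℂ) * (f + g) (projT d x))
          = fun x => (v x : ℂ) * f (projT d x) + (v x : ℂ) * g (projT d x) := by
        funext x
        rw [ContinuousMap.add_apply]
        ring
      rw [this, integral_add (hint f) (hint g), hf', hg', add_zero]
    | smul c f hfm hf' =>
      have : (fun x => (v x : ℂ) * (c • f) (projT d x))
          = fun x => c • ((v x : ℂ) * f (projT d x)) := by
        funext x
        rw [ContinuousMap.smul_apply]
        simp [smul_eq_mul]
        ring
      rw [this, integral_smul, hf', smul_zero]
  -- V is in the closure of the span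
  have hVclos : V ∈ closure ((charSubalgebra d : Set C(XT d, ℂ))) := by
    rw [← StarSubalgebra.topologicalClosure_coe, charSubalgebra_closure_eq_top]
    trivial
  set I := ∫ x in Box d, (v x) ^ 2 with hI
  set N := ∫ x in Box d, |v x| with hN
  have hIpos : 0 ≤ I := setIntegral_nonneg (measurableSet_box d) fun x _ => sq_nonneg _
  have hNpos : 0 ≤ N := setIntegral_nonneg (measurableSet_box d) fun x _ => abs_nonneg _
  -- the key smallness estimate
  have hkey : ∀ ε : ℝ, 0 < ε → I ≤ ε * N := by
    intro ε hε
    obtain ⟨P, hPA, hPd⟩ := Metric.mem_closure_iff.mp hVclos ε hε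
    have hPspan : P ∈ Submodule.span ℂ (Set.range (charX d)) := by
      rw [← charSubalgebra_coe]
      exact hPA
    have hIC : (I : ℂ) = ∫ x in Box d, (v x : ℂ) * ((V - P) (projT d x)) := by
      have h1 : (∫ x in Box d, (v x : ℂ) * ((V - P) (projT d x)))
          = (∫ x in Box d, (v x : ℂ) * (V (projT d x)))
            - ∫ x in Box d, (v x : ℂ) * (P (projT d x)) := by
        rw [← integral_sub (hint V) (hint P)]
        apply setIntegral_congr_ae (measurableSet_box d)
        filter_upwards with x _
        rw [ContinuousMap.sub_apply]
        ring
      rw [h1, hQ P hPspan, sub_zero]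
      have h2 : (fun x => (v x : ℂ) * (V (projT d x))) = fun x => (((v x)^2 : ℝ) : ℂ) := by
        funext x
        rw [hVproj x]
        push_cast
        ring
      rw [h2]
      exact (integral_ofReal (𝕜 := ℂ)).symm
    have hupper : ‖(I : ℂ)‖ ≤ ε * N := by
      rw [hIC]
      refine le_trans (norm_integral_le_integral_norm _) ?_
      have : (∫ x in Box d, ‖(v x : ℂ) * ((V - P) (projT d x))‖) ≤ ∫ x in Box d, ε * |v x| := by
        apply setIntegral_mono_on
        · exact (hint (V - P)).norm
        · exact (integrableOn_box_real hv.abs).const_mul ε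
        · exact measurableSet_box d
        · intro x _
          rw [norm_mul, Complex.norm_real, Real.norm_eq_abs, mul_comm]
          apply mul_le_mul_of_nonneg_right _ (abs_nonneg _)
          calc ‖(V - P) (projT d x)‖ ≤ ‖V - P‖ := ContinuousMap.norm_coe_le_norm _ _
            _ = dist V P := by rw [dist_eq_norm]
            _ ≤ ε := le_of_lt hPd
      refine le_trans this ?_
      rw [integral_const_mul]
    calc I = ‖(I : ℂ)‖ := by rw [Complex.norm_real, Real.norm_eq_abs, abs_of_nonneg hIpos]
      _ ≤ ε * N := hupper
  have hIzero : I = 0 := by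
    by_contra hne
    have hIp : 0 < I := lt_of_le_of_ne hIpos (Ne.symm hne)
    have hk2 := hkey (I / (2 * (N + 1))) (by positivity)
    rw [div_mul_eq_mul_div, le_div_iff₀ (by linarith : (0:ℝ) < 2 * (N + 1))] at hk2
    nlinarith [mul_nonneg hIpos hNpos]
  -- v vanishes on the open cube
  have hW : ∀ x : E d, (∀ i, |x i| < 1/2) → v x = 0 := by
    intro x₀ hx₀
    by_contra hvx
    set m := |v x₀| / 2 with hm
    have hmpos : 0 < m := by
      have : 0 < |v x₀| := abs_pos.mpr hvx
      positivity
    set U : Set (E d) := {x | (∀ i, |x i| < 1/2) ∧ m < |v x|} with hU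
    have hUopen : IsOpen U := by
      apply IsOpen.inter
      · show IsOpen {x : E d | ∀ i, |x i| < 1/2}
        rw [Set.setOf_forall]
        exact isOpen_iInter_of_finite fun i =>
          isOpen_lt (EuclideanSpace.proj (𝕜 := ℝ) i).continuous.abs continuous_const
      · exact isOpen_lt continuous_const hv.abs
    have hx₀U : x₀ ∈ U := by
      refine ⟨hx₀, ?_⟩
      rw [hm]
      have : 0 < |v x₀| := abs_pos.mpr hvx
      linarith
    obtain ⟨ρ, hρ, hball⟩ := Metric.isOpen_iff.mp hUopen x₀ hx₀U
    have hUBox : U ⊆ Box d := by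
      intro y hy i
      have h1 := abs_lt.mp (hy.1 i)
      exact ⟨le_of_lt h1.1, h1.2⟩
    have hballBox : Metric.ball x₀ ρ ⊆ Box d := fun y hy => hUBox (hball hy)
    have hv2int : IntegrableOn (fun x => (v x)^2) (Box d) := integrableOn_box_real (hv.pow 2)
    have hIball : m^2 * (volume (Metric.ball x₀ ρ)).toReal
        ≤ ∫ x in Metric.ball x₀ ρ, (v x)^2 := by
      apply setIntegral_ge_of_const_le_real Metric.isOpen_ball.measurableSet
        measure_ball_lt_top.ne (fun x hx => ?_) (hv2int.mono_set hballBox)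
      have h2 := (hball hx).2
      nlinarith [abs_nonneg (v x), sq_abs (v x), hmpos]
    have hI2 : (∫ x in Metric.ball x₀ ρ, (v x)^2) ≤ I := by
      apply setIntegral_mono_set hv2int
        (Filter.Eventually.of_forall fun x => sq_nonneg _)
        (HasSubset.Subset.eventuallyLE hballBox)
    have hvolpos : 0 < (volume (Metric.ball x₀ ρ)).toReal := by
      have h1 : 0 < volume (Metric.ball x₀ ρ) := Metric.measure_ball_pos _ _ hρ
      exact ENNReal.toReal_pos h1.ne' measure_ball_lt_top.ne
    nlinarith [mul_pos (pow_pos hmpos 2) hvolpos]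
  -- v vanishes on the closed cube
  have hcube : ∀ z ∈ cube d, v z = 0 := by
    intro z hz
    have hT : Filter.Tendsto (fun c : ℝ => v (c • z)) (𝓝[<] (1:ℝ)) (𝓝 (v z)) := by
      have hc : Continuous fun c : ℝ => v (c • z) := hv.comp (continuous_id.smul continuous_const)
      have h2 := hc.tendsto 1
      rw [one_smul] at h2
      exact h2.mono_left nhdsWithin_le_nhds
    have hev : ∀ᶠ c in 𝓝[<] (1:ℝ), v (c • z) = 0 := by
      filter_upwards [Ioo_mem_nhdsLT_of_mem (show (1:ℝ) ∈ Set.Ioc 0 1 by norm_num)] with c hc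
      apply hW
      intro i
      have h1 : (c • z) i = c * z i := rfl
      rw [h1, abs_mul, abs_of_pos hc.1]
      nlinarith [hc.1, hc.2, hz i, abs_nonneg (z i)]
    have hT0 : Filter.Tendsto (fun c : ℝ => v (c • z)) (𝓝[<] (1:ℝ)) (𝓝 0) :=
      Filter.Tendsto.congr' (Filter.EventuallyEq.symm hev) tendsto_const_nhds
    exact tendsto_nhds_unique hT hT0
  intro x
  obtain ⟨k, hk⟩ := exists_box_rep d x
  have hx : v x = v (x - latt d k) := by
    have h1 := hper (x - latt d k) k
    rw [sub_add_cancel] at h1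
    exact h1
  rw [hx]
  exact hcube _ (box_subset_cube d hk)

end Stmt4Aux
namespace Stmt4Aux
open Topology

lemma latt_zero (d : ℕ) : latt d (0 : Fin d → ℤ) = 0 := by
  ext i
  show ((0:ℤ) : ℝ) = 0
  simp

lemma coord_le_norm {d : ℕ} (z : E d) (i : Fin d) : |z i| ≤ ‖z‖ := by
  rw [EuclideanSpace.norm_eq, ← Real.sqrt_sq_eq_abs]
  apply Real.sqrt_le_sqrt
  have := Finset.single_le_sum (f := fun j => ‖z j‖ ^ 2) (fun j _ => sq_nonneg _)
    (Finset.mem_univ i)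
  calc z i ^ 2 = ‖z i‖ ^ 2 := by rw [Real.norm_eq_abs, sq_abs]
    _ ≤ _ := this

lemma latt_sub (d : ℕ) (k m : Fin d → ℤ) : latt d (k - m) = latt d k - latt d m := by
  rw [sub_eq_add_neg, latt_add, latt_neg, sub_eq_add_neg]

lemma periodic_shift {d : ℕ} {g : E d → ℝ} (hper : IsPeriodic d g) (x : E d) (k : Fin d → ℤ) :
    g x = g (x - latt d k) := by
  have h1 := hper (x - latt d k) k
  rw [sub_add_cancel] at h1
  exact h1

lemma lattice_eq_of_close {d : ℕ} {m m' : Fin d → ℤ}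
    (h : ‖latt d m' - latt d m‖ < 1) : m' = m := by
  by_contra hne
  obtain ⟨i, hi⟩ : ∃ i, m' i ≠ m i := by
    by_contra hc
    push_neg at hc
    exact hne (funext hc)
  have h1 : (latt d m' - latt d m) i = ((m' i : ℝ) - m i) := rfl
  have h2 : (1:ℝ) ≤ |(m' i : ℝ) - m i| := by
    rw [show ((m' i : ℝ) - m i) = ((m' i - m i : ℤ) : ℝ) by push_cast; ring, ← Int.cast_abs]
    exact_mod_cast Int.one_le_abs (sub_ne_zero.mpr hi)
  have h3 := coord_le_norm (latt d m' - latt d m) i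
  rw [h1] at h3
  linarith

lemma riesz_unique {d : ℕ} {s : ℝ} (hd : 3 ≤ d) (hs : 0 ≤ s) (hs' : s < (d:ℝ) - 2)
    {g1 g2 : E d → ℝ} (h1 : IsRieszPotential d s g1) (h1' : HasRieszSingularity d s g1)
    (h2 : IsRieszPotential d s g2) (h2' : HasRieszSingularity d s g2) :
    ∀ x, (∀ k : Fin d → ℤ, x ≠ latt d k) → g1 x = g2 x := by
  classical
  obtain ⟨p1, hp1, hp1e⟩ := h1'
  obtain ⟨p2, hp2, hp2e⟩ := h2'
  set w : E d → ℝ := fun x =>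
    if ∃ k : Fin d → ℤ, x = latt d k then p1 0 - p2 0 else g1 x - g2 x with hw
  have hwnl : ∀ x : E d, (¬ ∃ k : Fin d → ℤ, x = latt d k) → w x = g1 x - g2 x := by
    intro x hx
    rw [hw]
    simp only
    rw [if_neg hx]
  have hwl : ∀ x : E d, (∃ k : Fin d → ℤ, x = latt d k) → w x = p1 0 - p2 0 := by
    intro x hx
    rw [hw]
    simp only
    rw [if_pos hx]
  -- periodicity of w
  have hwper : IsPeriodic d w := by
    intro x k
    by_cases hx : ∃ m : Fin d → ℤ, x = latt d m
    · obtain ⟨m, rfl⟩ := hx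
      rw [hwl _ ⟨m + k, by rw [latt_add]⟩, hwl _ ⟨m, rfl⟩]
    · have hx2 : ¬ ∃ m : Fin d → ℤ, x + latt d k = latt d m := by
        rintro ⟨m, hm⟩
        refine hx ⟨m - k, ?_⟩
        rw [latt_sub, eq_sub_iff_add_eq, ← hm]
      rw [hwnl _ hx2, hwnl _ hx, h1.periodic x k, h2.periodic x k]
  -- continuity of w
  have hwcont : Continuous w := by
    rw [continuous_iff_continuousAt]
    intro x
    by_cases hx : ∃ m : Fin d → ℤ, x = latt d m
    · obtain ⟨m, rfl⟩ := hx
      have hball14 : Metric.ball (0 : E d) (1/4) ∈ 𝓝 (0 : E d) :=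
        Metric.ball_mem_nhds 0 (by norm_num)
      have hsub : ContinuousAt (fun y : E d => y - latt d m) (latt d m) :=
        (continuous_id.sub continuous_const).continuousAt
      have hq : ContinuousAt (fun y : E d => p1 (y - latt d m) - p2 (y - latt d m))
          (latt d m) := by
        have c1 : ContinuousAt p1 ((fun y : E d => y - latt d m) (latt d m)) := by
          show ContinuousAt p1 (latt d m - latt d m)
          rw [sub_self]
          exact hp1.continuousOn.continuousAt hball14
        have c2 : ContinuousAt p2 ((fun y : E d => y - latt d m) (latt d m)) := by
          show ContinuousAt p2 (latt d m - latt d m)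
          rw [sub_self]
          exact hp2.continuousOn.continuousAt hball14
        exact ((ContinuousAt.comp (g := p1) (f := fun y : E d => y - latt d m) c1 hsub).sub
          (ContinuousAt.comp (g := p2) (f := fun y : E d => y - latt d m) c2 hsub))
      apply hq.congr
      have hEq : ∀ y ∈ Metric.ball (latt d m) (1/8),
          w y = p1 (y - latt d m) - p2 (y - latt d m) := by
        intro y hy
        rw [Metric.mem_ball, dist_eq_norm] at hy
        by_cases hyl : ∃ m' : Fin d → ℤ, y = latt d m'
        · obtain ⟨m', rfl⟩ := hyl
          have hmm : m' = m := lattice_eq_of_close (by linarith)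
          subst hmm
          rw [hwl _ ⟨m', rfl⟩, sub_self]
        · have hz : y - latt d m ≠ 0 := by
            intro h0
            exact hyl ⟨m, by rw [← sub_eq_zero]; exact h0⟩
          have hzb : y - latt d m ∈ Metric.ball (0 : E d) (1/4) := by
            rw [Metric.mem_ball, dist_eq_norm, sub_zero]
            calc ‖y - latt d m‖ < 1/8 := hy
              _ < 1/4 := by norm_num
          rw [hwnl _ hyl, periodic_shift h1.periodic y m, periodic_shift h2.periodic y m,
            hp1e _ hzb hz, hp2e _ hzb hz]
          ring
      exact (Filter.eventuallyEq_of_mem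
        (Metric.ball_mem_nhds (latt d m) (by norm_num : (0:ℝ) < 1/8)) hEq).symm
    · have hx' : ∀ k : Fin d → ℤ, x ≠ latt d k := by
        intro k hk
        exact hx ⟨k, hk⟩
      have hc : ContinuousAt (fun y => g1 y - g2 y) x :=
        ((h1.smooth x hx').continuousAt).sub ((h2.smooth x hx').continuousAt)
      apply hc.congr
      have hEq2 : ∀ y ∈ lattFree d, w y = g1 y - g2 y := by
        intro y hy
        exact hwnl _ (by rintro ⟨k, rfl⟩; exact hy k rfl)
      exact (Filter.eventuallyEq_of_mem ((isOpen_lattFree d).mem_nhds hx') hEq2).symm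
  -- Fourier coefficients of w vanish
  have hwf : ∀ k : Fin d → ℤ, fcoeff d w k = 0 := by
    have hint1 := riesz_integrable hd hs hs' h1
    have hint2 := riesz_integrable hd hs hs' h2
    intro k
    have hdiff := fcoeff_diff (by omega : 0 < d) hint1 hint2 (fun x hxb hx0 =>
      hwnl _ (by
        rintro ⟨m, rfl⟩
        exact hx0 (by rw [cube_lattice (box_subset_cube d hxb), latt_zero]))) k
    rw [hdiff]
    rcases eq_or_ne k 0 with rfl | hk
    · rw [h1.mean, h2.mean, sub_zero]
    · rw [h1.four k hk, h2.four k hk, sub_self]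
  -- conclude
  have hzero := zero_of_fcoeff_zero (by omega : 0 < d) hwcont hwper hwf
  intro x hx
  have h0 := hzero x
  rw [hwnl _ (by rintro ⟨k, rfl⟩; exact hx k rfl)] at h0
  linarith

end Stmt4Aux
namespace Stmt4Aux
open Topology

lemma sq_rpow (x : ℝ) (hx : 0 ≤ x) : x ^ (2:ℕ) = x ^ ((2:ℝ)) := by
  rw [← Real.rpow_natCast x 2]
  norm_num

/-- Derivative bound for the Riesz kernel at a nonzero point. -/
lemma kernel_fderiv {d : ℕ} (s : ℝ) (hs : 0 ≤ s) (z : E d) (hz : z ≠ 0) :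
    ∃ D : E d →L[ℝ] ℝ,
      HasFDerivAt (fun x : E d => if 0 < s then ‖x‖ ^ (-s) else -Real.log ‖x‖) D z ∧
      ‖D‖ * ‖z‖ ≤ (s + 1) * ‖z‖ ^ (-s) := by
  have hzpos : 0 < ‖z‖ := norm_pos_iff.mpr hz
  have ht0 : (0:ℝ) < ⟪z, z⟫ := by
    rw [real_inner_self_eq_norm_sq]
    positivity
  have hin : HasFDerivAt (fun x : E d => ⟪x, x⟫)
      ((fderivInnerCLM ℝ ((z : E d), (z : E d))).comp
        ((ContinuousLinearMap.id ℝ (E d)).prod (ContinuousLinearMap.id ℝ (E d)))) z :=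
    (hasFDerivAt_id z).inner ℝ (hasFDerivAt_id z)
  set L := ((fderivInnerCLM ℝ ((z : E d), (z : E d))).comp
      ((ContinuousLinearMap.id ℝ (E d)).prod (ContinuousLinearMap.id ℝ (E d)))) with hL
  have hLnorm : ‖L‖ ≤ 2 * ‖z‖ := by
    apply ContinuousLinearMap.opNorm_le_bound _ (by positivity)
    intro w
    have hLw : L w = ⟪z, w⟫ + ⟪w, z⟫ := by
      rw [hL]
      rfl
    rw [hLw]
    calc ‖⟪z, w⟫ + ⟪w, z⟫‖ ≤ ‖⟪z, w⟫‖ + ‖⟪w, z⟫‖ := norm_add_le _ _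
      _ ≤ ‖z‖ * ‖w‖ + ‖w‖ * ‖z‖ := by
          apply add_le_add
          · rw [Real.norm_eq_abs]; exact abs_real_inner_le_norm z w
          · rw [Real.norm_eq_abs]; exact abs_real_inner_le_norm w z
      _ = 2 * ‖z‖ * ‖w‖ := by ring
  rcases lt_or_eq_of_le hs with hsp | hs0
  · -- s > 0
    have hφeq : (fun x : E d => if 0 < s then ‖x‖ ^ (-s) else -Real.log ‖x‖)
        = fun x : E d => ⟪x, x⟫ ^ (-s/2) := by
      funext x
      rw [if_pos hsp, real_inner_self_eq_norm_sq, sq_rpow ‖x‖ (norm_nonneg x),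
        ← Real.rpow_mul (norm_nonneg x)]
      congr 1
      ring
    have hrpow : HasDerivAt (fun t : ℝ => t ^ (-s/2)) ((-s/2) * ⟪z, z⟫ ^ (-s/2 - 1)) ⟪z, z⟫ :=
      Real.hasDerivAt_rpow_const (Or.inl (ne_of_gt ht0))
    have hD : HasFDerivAt (fun x : E d => ⟪x, x⟫ ^ (-s/2))
        (((-s/2) * ⟪z, z⟫ ^ (-s/2 - 1)) • L) z :=
      HasDerivAt.comp_hasFDerivAt (f := fun x : E d => ⟪x, x⟫) z hrpow hin
    refine ⟨((-s/2) * ⟪z, z⟫ ^ (-s/2 - 1)) • L, by rw [hφeq]; exact hD, ?_⟩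
    have h1 : ‖((-s/2) * ⟪z, z⟫ ^ (-s/2 - 1)) • L‖ ≤ (s/2) * ⟪z, z⟫ ^ (-s/2 - 1) * (2 * ‖z‖) := by
      refine le_trans (ContinuousLinearMap.opNorm_smul_le _ _) ?_
      have h2 : ‖(-s/2) * ⟪z, z⟫ ^ (-s/2 - 1)‖ = (s/2) * ⟪z, z⟫ ^ (-s/2 - 1) := by
        rw [Real.norm_eq_abs, abs_mul, abs_of_pos (Real.rpow_pos_of_pos ht0 _),
          abs_of_nonpos (by linarith : -s/2 ≤ 0)]
        ring
      rw [h2]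
      exact mul_le_mul_of_nonneg_left hLnorm
        (mul_nonneg (by linarith) (Real.rpow_pos_of_pos ht0 _).le)
    have h3 : ⟪z, z⟫ ^ (-s/2 - 1) = ‖z‖ ^ (-s - 2) := by
      rw [real_inner_self_eq_norm_sq, sq_rpow ‖z‖ (norm_nonneg z),
        ← Real.rpow_mul (norm_nonneg z)]
      congr 1
      ring
    have h4 : ‖z‖ ^ (-s - 2) * ‖z‖ * ‖z‖ = ‖z‖ ^ (-s) := by
      rw [mul_assoc, show ‖z‖ * ‖z‖ = ‖z‖ ^ ((2:ℝ)) by rw [← sq_rpow _ (norm_nonneg z)]; ring,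
        ← Real.rpow_add hzpos]
      congr 1
      ring
    calc ‖((-s/2) * ⟪z, z⟫ ^ (-s/2 - 1)) • L‖ * ‖z‖
        ≤ ((s/2) * ⟪z, z⟫ ^ (-s/2 - 1) * (2 * ‖z‖)) * ‖z‖ :=
          mul_le_mul_of_nonneg_right h1 (norm_nonneg z)
      _ = s * (‖z‖ ^ (-s - 2) * ‖z‖ * ‖z‖) := by rw [h3]; ring
      _ = s * ‖z‖ ^ (-s) := by rw [h4]
      _ ≤ (s + 1) * ‖z‖ ^ (-s) := by
          apply mul_le_mul_of_nonneg_right (by linarith) (Real.rpow_pos_of_pos hzpos _).le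
  · -- s = 0
    subst hs0
    have hφeq : (fun x : E d => if 0 < (0:ℝ) then ‖x‖ ^ (-(0:ℝ)) else -Real.log ‖x‖)
        = fun x : E d => (-(1/2) : ℝ) * Real.log ⟪x, x⟫ := by
      funext x
      rw [if_neg (lt_irrefl 0), real_inner_self_eq_norm_sq, Real.log_pow]
      push_cast
      ring
    have hlog : HasDerivAt (fun t : ℝ => (-(1/2) : ℝ) * Real.log t)
        (-(1/2) * ⟪z, z⟫⁻¹) ⟪z, z⟫ := by
      have h5 := (Real.hasDerivAt_log (ne_of_gt ht0)).const_mul (-(1/2) : ℝ)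
      simpa using h5
    have hD : HasFDerivAt (fun x : E d => (-(1/2) : ℝ) * Real.log ⟪x, x⟫)
        ((-(1/2) * ⟪z, z⟫⁻¹) • L) z :=
      HasDerivAt.comp_hasFDerivAt (f := fun x : E d => ⟪x, x⟫) z hlog hin
    refine ⟨(-(1/2) * ⟪z, z⟫⁻¹) • L, by rw [hφeq]; exact hD, ?_⟩
    have h1 : ‖(-(1/2) * ⟪z, z⟫⁻¹) • L‖ ≤ (1/2) * ⟪z, z⟫⁻¹ * (2 * ‖z‖) := by
      refine le_trans (ContinuousLinearMap.opNorm_smul_le _ _) ?_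
      have h2 : ‖(-(1/2) : ℝ) * ⟪z, z⟫⁻¹‖ = (1/2) * ⟪z, z⟫⁻¹ := by
        rw [Real.norm_eq_abs, abs_mul, abs_of_pos (by positivity : (0:ℝ) < ⟪z, z⟫⁻¹)]
        norm_num
      rw [h2]
      exact mul_le_mul_of_nonneg_left hLnorm (by positivity)
    have h3 : ⟪z, z⟫⁻¹ = (‖z‖ ^ (2:ℕ))⁻¹ := by
      rw [real_inner_self_eq_norm_sq]
    calc ‖(-(1/2) * ⟪z, z⟫⁻¹) • L‖ * ‖z‖
        ≤ ((1/2) * ⟪z, z⟫⁻¹ * (2 * ‖z‖)) * ‖z‖ := mul_le_mul_of_nonneg_right h1 (norm_nonneg z)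
      _ = 1 := by
          rw [h3]
          field_simp
      _ ≤ (0 + 1) * ‖z‖ ^ (-(0:ℝ)) := by
          rw [neg_zero, Real.rpow_zero]
          norm_num
end Stmt4Aux
namespace Stmt4Aux
open Topology

lemma riesz_bound {d : ℕ} {s : ℝ} (hd : 3 ≤ d) (hs : 0 ≤ s) (hs' : s < (d:ℝ) - 2)
    {g : E d → ℝ} (hg : IsRieszPotential d s g) (hg' : HasRieszSingularity d s g) :
    ∃ C : ℝ, 1 ≤ C ∧ ∀ z ∈ cube d, z ≠ 0 →
      1 ≤ g z + C ∧ ‖z‖ * ‖gradient g z‖ ≤ C * (g z + C) := by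
  obtain ⟨p, hp, hpe⟩ := hg'
  have hlf : ∀ z : E d, z ∈ cube d → z ≠ 0 → ∀ k : Fin d → ℤ, z ≠ latt d k := by
    intro z hz hz0 k hk
    apply hz0
    have hk0 : k = 0 := cube_lattice (by rw [← hk]; exact hz)
    rw [hk, hk0, latt_zero]
  set S := cube d ∩ {z : E d | 1/8 ≤ ‖z‖} with hSdef
  have hScomp : IsCompact S :=
    (isCompact_cube d).inter_right (isClosed_le continuous_const continuous_norm)
  have hSlf : ∀ z ∈ S, ∀ k : Fin d → ℤ, z ≠ latt d k := by
    intro z hz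
    have hz8 : (1/8 : ℝ) ≤ ‖z‖ := hz.2
    exact hlf z hz.1 (by intro h0; rw [h0, norm_zero] at hz8; linarith)
  have hgS : ContinuousOn g S := fun z hz =>
    ((hg.smooth z (hSlf z hz)).continuousAt).continuousWithinAt
  have hFS : ContinuousOn (fun z : E d => ‖z‖ * ‖fderiv ℝ g z‖) S := by
    intro z hz
    have hcf : ContinuousAt (fderiv ℝ g) z :=
      ((hg.smooth z (hSlf z hz)).fderiv_right (m := 1) (WithTop.coe_le_coe.mpr le_top)).continuousAt
    exact ((continuous_norm.continuousAt).mul hcf.norm).continuousWithinAt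
  obtain ⟨M1, hM1⟩ := hScomp.exists_bound_of_continuousOn hFS
  obtain ⟨M2, hM2⟩ := hScomp.exists_bound_of_continuousOn hgS
  have hcball : Metric.closedBall (0 : E d) (1/8) ⊆ Metric.ball (0 : E d) (1/4) :=
    Metric.closedBall_subset_ball (by norm_num)
  obtain ⟨M3, hM3⟩ := (isCompact_closedBall (0:E d) (1/8)).exists_bound_of_continuousOn
    (hp.continuousOn.mono hcball)
  have hpf : ContinuousOn (fderiv ℝ p) (Metric.ball (0:E d) (1/4)) :=
    hp.continuousOn_fderiv_of_isOpen Metric.isOpen_ball (by simp)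
  obtain ⟨M4, hM4⟩ := (isCompact_closedBall (0:E d) (1/8)).exists_bound_of_continuousOn
    (hpf.mono hcball)
  set A1 := max M1 0 with hA1
  set A2 := max M2 0 with hA2
  set A3 := max M3 0 with hA3
  set A4 := max M4 0 with hA4
  have hA1n : 0 ≤ A1 := le_max_right _ _
  have hA2n : 0 ≤ A2 := le_max_right _ _
  have hA3n : 0 ≤ A3 := le_max_right _ _
  have hA4n : 0 ≤ A4 := le_max_right _ _
  set C := 1 + A1 + A2 + A3 + A4 + s with hC
  have hC1 : 1 ≤ C := by rw [hC]; linarith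
  have hC0 : 0 ≤ C := by linarith
  refine ⟨C, hC1, ?_⟩
  intro z hz hz0
  rw [norm_gradient_eq]
  by_cases hcase : 1/8 ≤ ‖z‖
  · -- far from the singularity
    have hzS : z ∈ S := ⟨hz, hcase⟩
    have hb2 : |g z| ≤ A2 := le_trans (by rw [← Real.norm_eq_abs]; exact hM2 z hzS) (le_max_left _ _)
    have hb1 : ‖z‖ * ‖fderiv ℝ g z‖ ≤ A1 := by
      have := hM1 z hzS
      rw [Real.norm_eq_abs] at this
      exact le_trans (le_abs_self _) (le_trans this (le_max_left _ _))
    have hglow : 1 ≤ g z + C := by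
      have := abs_le.mp hb2
      rw [hC]
      linarith [this.1]
    refine ⟨hglow, ?_⟩
    have hCA1 : A1 ≤ C := by rw [hC]; linarith
    nlinarith
  · -- close to the singularity
    push_neg at hcase
    have hzn : ‖z‖ ≤ 1/8 := le_of_lt hcase
    have hzpos : 0 < ‖z‖ := norm_pos_iff.mpr hz0
    have hzball : z ∈ Metric.ball (0 : E d) (1/4) := by
      rw [Metric.mem_ball, dist_zero_right]
      linarith
    have hzcball : z ∈ Metric.closedBall (0 : E d) (1/8) := by
      rw [Metric.mem_closedBall, dist_zero_right]
      exact hzn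
    obtain ⟨D, hD, hDb⟩ := kernel_fderiv s hs z hz0
    have hpdiff : DifferentiableAt ℝ p z :=
      (hp.differentiableOn (by simp)).differentiableAt (Metric.isOpen_ball.mem_nhds hzball)
    have hUopen : IsOpen (Metric.ball (0 : E d) (1/4) ∩ {(0:E d)}ᶜ) :=
      Metric.isOpen_ball.inter isOpen_compl_singleton
    have hzU : z ∈ Metric.ball (0 : E d) (1/4) ∩ {(0:E d)}ᶜ := ⟨hzball, hz0⟩
    have hev : g =ᶠ[𝓝 z]
        fun y => (if 0 < s then ‖y‖ ^ (-s) else -Real.log ‖y‖) + p y := by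
      apply Filter.eventuallyEq_of_mem (hUopen.mem_nhds hzU)
      intro y hy
      exact hpe y hy.1 hy.2
    have h6 : HasFDerivAt (fun y : E d => (if 0 < s then ‖y‖ ^ (-s) else -Real.log ‖y‖) + p y)
        (D + fderiv ℝ p z) z := hD.add hpdiff.hasFDerivAt
    have hfg : fderiv ℝ g z = D + fderiv ℝ p z := by
      rw [hev.fderiv_eq]
      exact h6.fderiv
    set K := ‖z‖ ^ (-s) with hK
    have hK1 : 1 ≤ K :=
      Real.one_le_rpow_of_pos_of_le_one_of_nonpos hzpos (by linarith) (by linarith)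
    have hb4 : ‖fderiv ℝ p z‖ ≤ A4 := le_trans (hM4 z hzcball) (le_max_left _ _)
    have hb3 : |p z| ≤ A3 := le_trans (by rw [← Real.norm_eq_abs]; exact hM3 z hzcball)
      (le_max_left _ _)
    -- lower bound for g z
    have hlow : K - A3 - 1 ≤ g z := by
      rw [hpe z hzball hz0]
      rcases lt_or_eq_of_le hs with hsp | hs0
      · rw [if_pos hsp]
        have := abs_le.mp hb3
        rw [hK]
        linarith [this.1]
      · rw [if_neg (by rw [← hs0]; exact lt_irrefl 0)]
        have hlog : Real.log ‖z‖ ≤ 0 := Real.log_nonpos (norm_nonneg z) (by linarith)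
        have hKeq : K = 1 := by rw [hK, ← hs0, neg_zero, Real.rpow_zero]
        have := abs_le.mp hb3
        rw [hKeq]
        linarith [this.1]
    have hglow : 1 ≤ g z + C := by
      rw [hC]
      linarith [hK1, hlow]
    refine ⟨hglow, ?_⟩
    have e2 : ‖z‖ * ‖fderiv ℝ g z‖ ≤ (s+1) * K + A4 := by
      rw [hfg]
      calc ‖z‖ * ‖D + fderiv ℝ p z‖ ≤ ‖z‖ * (‖D‖ + ‖fderiv ℝ p z‖) :=
            mul_le_mul_of_nonneg_left (norm_add_le _ _) (norm_nonneg z)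
        _ = ‖D‖ * ‖z‖ + ‖z‖ * ‖fderiv ℝ p z‖ := by ring
        _ ≤ (s+1) * K + 1 * A4 := by
            apply add_le_add hDb
            apply mul_le_mul (by linarith) hb4 (norm_nonneg _) (by norm_num)
        _ = (s+1) * K + A4 := by ring
    have e3 : (s+1) * K + A4 ≤ (s + 1 + A4) * K := by nlinarith
    have e5 : K ≤ g z + C := by
      rw [hC]
      linarith [hlow]
    have e4 : s + 1 + A4 ≤ C := by rw [hC]; linarith
    calc ‖z‖ * ‖fderiv ℝ g z‖ ≤ (s + 1 + A4) * K := le_trans e2 e3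
      _ ≤ C * (g z + C) := by
          apply mul_le_mul e4 e5 (by linarith) hC0
end Stmt4Aux



/-- **Commutator-type pointwise bound.** For the periodic Riesz potential `g` with parameter
`s ∈ [0, d-2)` there is `C = C(d,s) > 0` so that for every periodic Lipschitz (differentiable)
vector field `ψ` and all `x ≠ y` on the torus,
`|(ψ(x) - ψ(y)) ⬝ ∇g(x-y)| ≤ C ‖∇ψ‖_{L^∞} (g(x-y) + C)`. -/
theorem stmt4 (d : ℕ) (s : ℝ) (hd : 3 ≤ d) (hs : 0 ≤ s) (hs' : s < (d : ℝ) - 2) :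
    ∃ C > 0, ∀ g : E d → ℝ, IsRieszPotential d s g → HasRieszSingularity d s g →
      ∀ ψ : E d → E d, ∀ K : NNReal, LipschitzWith K ψ → Differentiable ℝ ψ →
        IsPeriodicV d ψ →
        ∀ x y : E d, (∀ k : Fin d → ℤ, x - y ≠ latt d k) →
          |⟪ψ x - ψ y, gradient g (x - y)⟫| ≤ C * gradSup d ψ * (g (x - y) + C) := by
  classical
  by_cases hex : ∃ g : E d → ℝ, IsRieszPotential d s g ∧ HasRieszSingularity d s g
  · obtain ⟨g₀, hg₀, hg₀'⟩ := hex
    obtain ⟨C, hC1, hCb⟩ := Stmt4Aux.riesz_bound hd hs hs' hg₀ hg₀'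
    refine ⟨C, by linarith, ?_⟩
    intro g hg hg' ψ K hψlip hψdiff hψper x y hxy
    have huniq : ∀ w, (∀ k : Fin d → ℤ, w ≠ latt d k) → g w = g₀ w :=
      Stmt4Aux.riesz_unique hd hs hs' hg hg' hg₀ hg₀'
    have hgrad : ∀ w, (∀ k : Fin d → ℤ, w ≠ latt d k) → gradient g w = gradient g₀ w := by
      intro w hw
      have hfd : fderiv ℝ g w = fderiv ℝ g₀ w := by
        apply Filter.EventuallyEq.fderiv_eq
        apply Filter.eventuallyEq_of_mem ((Stmt4Aux.isOpen_lattFree d).mem_nhds hw)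
        intro u hu
        exact huniq u hu
      unfold gradient
      rw [hfd]
    obtain ⟨k, hk⟩ := Stmt4Aux.exists_box_rep d (x - y)
    have hz'cube : x - y - latt d k ∈ Stmt4Aux.cube d := Stmt4Aux.box_subset_cube d hk
    have hz'0 : x - y - latt d k ≠ 0 := by
      intro h
      rw [sub_eq_zero] at h
      exact hxy k h
    have hsum : x - y - latt d k + latt d k = x - y := sub_add_cancel _ _
    have hz'lf : ∀ m : Fin d → ℤ, x - y - latt d k ≠ latt d m := by
      intro m hm
      apply hxy (m + k)
      rw [Stmt4Aux.latt_add, ← hm]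
      abel
    -- agreement of values and gradients
    have hgz : g (x - y) = g₀ (x - y - latt d k) := by
      rw [huniq (x - y) hxy, Stmt4Aux.periodic_shift hg₀.periodic (x - y) k]
    have hgradz : gradient g (x - y) = gradient g₀ (x - y - latt d k) := by
      rw [hgrad (x - y) hxy]
      have hdiff : DifferentiableAt ℝ g₀ (x - y - latt d k + latt d k) := by
        rw [hsum]
        exact (hg₀.smooth (x - y) hxy).differentiableAt (by simp)
      have hshift := Stmt4Aux.gradient_shift g₀ hg₀.periodic (x - y - latt d k) k hdiff
      rw [hshift, hsum]
    -- Lipschitz control on ψ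
    have hψbdd : BddAbove (Set.range fun w : E d => ‖fderiv ℝ ψ w‖) := by
      refine ⟨(K : ℝ), ?_⟩
      rintro - ⟨w, rfl⟩
      exact norm_fderiv_le_of_lipschitz ℝ hψlip
    have hψle : ∀ w : E d, ‖fderiv ℝ ψ w‖ ≤ gradSup d ψ := fun w => le_ciSup hψbdd w
    have hψ0 : 0 ≤ gradSup d ψ := le_trans (norm_nonneg _) (hψle 0)
    have hψdiffb : ‖ψ x - ψ y‖ ≤ gradSup d ψ * ‖x - y - latt d k‖ := by
      have hxeq : x = (y + (x - y - latt d k)) + latt d k := by abel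
      have hψx : ψ x = ψ (y + (x - y - latt d k)) := by
        conv_lhs => rw [hxeq]
        exact hψper (y + (x - y - latt d k)) k
      rw [hψx]
      have hmv := (convex_univ : Convex ℝ (Set.univ : Set (E d))).norm_image_sub_le_of_norm_fderiv_le
        (fun w _ => (hψdiff w)) (fun w _ => hψle w) (Set.mem_univ y)
        (Set.mem_univ (y + (x - y - latt d k)))
      simpa [add_sub_cancel_left] using hmv
    obtain ⟨hg1, hg2⟩ := hCb (x - y - latt d k) hz'cube hz'0
    have hgr0 : (0:ℝ) ≤ ‖gradient g₀ (x - y - latt d k)‖ := norm_nonneg _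
    calc |⟪ψ x - ψ y, gradient g (x - y)⟫|
        ≤ ‖ψ x - ψ y‖ * ‖gradient g (x - y)‖ := abs_real_inner_le_norm _ _
      _ = ‖ψ x - ψ y‖ * ‖gradient g₀ (x - y - latt d k)‖ := by rw [hgradz]
      _ ≤ (gradSup d ψ * ‖x - y - latt d k‖) * ‖gradient g₀ (x - y - latt d k)‖ :=
          mul_le_mul_of_nonneg_right hψdiffb hgr0
      _ = gradSup d ψ * (‖x - y - latt d k‖ * ‖gradient g₀ (x - y - latt d k)‖) := by ring
      _ ≤ gradSup d ψ * (C * (g₀ (x - y - latt d k) + C)) := mul_le_mul_of_nonneg_left hg2 hψ0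
      _ = C * gradSup d ψ * (g (x - y) + C) := by rw [hgz]; ring
  · refine ⟨1, one_pos, ?_⟩
    intro g hg hg' ψ K hψlip hψdiff hψper x y hxy
    exact absurd ⟨g, hg, hg'⟩ hex
end
end

section
/- Let $\mu, \nu$ be probability measures on $\mathbb{T}^d$ with finite Sobolev norms $\|\mu\|_{\dot H^{1+(s-d)/2}}, \|\nu\|_{\dot H^{1+(s-d)/2}} < \infty$. Then for every sufficiently small $\delta > 0$ there exists $C_\delta > 0$ and a universal $C > 0$ such that $\|\mu - \nu\|_{\dot H^{(s-d)/2}}^2 \leq C_\delta\, d(\mu,\nu)^2 + C\delta\big(\|\mu\|_{\dot H^{1+(s-d)/2}}^2 + \|\nu\|_{\dot H^{1+(s-d)/2}}^2 + 1\big)$, where $d$ is the Wasserstein-1 distance. -/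
open MeasureTheory Filter ENNReal RealInnerProductSpace Real
noncomputable section

/-- Wasserstein-1 distance on the torus: supremum over periodic 1-Lipschitz test functions. -/
def wassT (d : ℕ) (μ ν : MeasureTheory.Measure (E d)) : ℝ :=
  ⨆ ψ : {ψ : E d → ℝ // LipschitzWith 1 ψ ∧ IsPeriodic d ψ},
    |(∫ x, ψ.1 x ∂μ) - ∫ x, ψ.1 x ∂ν|

namespace S6

lemma abs_apply_le_norm {d : ℕ} (x : E d) (i : Fin d) : |x i| ≤ ‖x‖ := by
  rw [EuclideanSpace.norm_eq]
  refine Real.le_sqrt_of_sq_le ?_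
  have := Finset.single_le_sum (f := fun j => ‖x j‖^2) (fun j _ => by positivity)
    (Finset.mem_univ i)
  simpa [Real.norm_eq_abs, sq_abs] using this

lemma one_le_norm_latt {d : ℕ} {k : Fin d → ℤ} (hk : k ≠ 0) : 1 ≤ ‖latt d k‖ := by
  obtain ⟨i, hi⟩ : ∃ i, k i ≠ 0 := by
    by_contra h; push_neg at h; exact hk (funext h)
  refine le_trans ?_ (abs_apply_le_norm (latt d k) i)
  have h1 : (1:ℤ) ≤ |k i| := Int.one_le_abs hi
  have := (Int.cast_le (R := ℝ)).2 h1
  simpa [latt, Int.cast_abs] using this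

lemma abs_cos_sub_cos (a b : ℝ) : |Real.cos a - Real.cos b| ≤ |a - b| := by
  rw [Real.cos_sub_cos]
  have h1 : |Real.sin ((a+b)/2)| ≤ 1 := Real.abs_sin_le_one ((a+b)/2)
  have h2 : |Real.sin ((a-b)/2)| ≤ |(a-b)/2| := Real.abs_sin_le_abs
  rw [abs_mul, abs_mul]
  have h3 : |(-2 : ℝ)| = 2 := by norm_num
  have h4 : |(a-b)/2| = |a-b|/2 := by rw [abs_div]; norm_num
  rw [h3]
  nlinarith [abs_nonneg (Real.sin ((a-b)/2)), abs_nonneg (a-b), abs_nonneg (Real.sin ((a+b)/2))]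

lemma abs_sin_sub_sin (a b : ℝ) : |Real.sin a - Real.sin b| ≤ |a - b| := by
  rw [Real.sin_sub_sin]
  have h1 : |Real.cos ((a+b)/2)| ≤ 1 := Real.abs_cos_le_one ((a+b)/2)
  have h2 : |Real.sin ((a-b)/2)| ≤ |(a-b)/2| := Real.abs_sin_le_abs
  rw [abs_mul, abs_mul]
  have h3 : |(2 : ℝ)| = 2 := by norm_num
  have h4 : |(a-b)/2| = |a-b|/2 := by rw [abs_div]; norm_num
  rw [h3]
  nlinarith [abs_nonneg (Real.sin ((a-b)/2)), abs_nonneg (a-b), abs_nonneg (Real.cos ((a+b)/2))]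

/-- The phase function. -/
def tl (d : ℕ) (k : Fin d → ℤ) (x : E d) : ℝ := 2*π*∑ i, (k i : ℝ) * x i

lemma tl_cont (d : ℕ) (k : Fin d → ℤ) : Continuous (tl d k) := by
  unfold tl; fun_prop

lemma tl_sub (d : ℕ) (k : Fin d → ℤ) (x y : E d) :
    |tl d k x - tl d k y| ≤ 2*π*‖latt d k‖ * ‖x - y‖ := by
  have hinner : (inner ℝ (latt d k) (x - y) : ℝ) = ∑ i, (k i:ℝ) * (x i - y i) := by
    simp [PiLp.inner_apply, RCLike.inner_apply, conj_trivial, latt, mul_comm]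
  have h1 : tl d k x - tl d k y = 2*π * (inner ℝ (latt d k) (x - y) : ℝ) := by
    rw [hinner, tl, tl]
    rw [← mul_sub, ← Finset.sum_sub_distrib]
    congr 1; apply Finset.sum_congr rfl; intro i _; ring
  rw [h1, abs_mul]
  have h2 : |(2*π : ℝ)| = 2*π := abs_of_nonneg (by positivity)
  have h3 : |(inner ℝ (latt d k) (x - y) : ℝ)| ≤ ‖latt d k‖ * ‖x - y‖ :=
    abs_real_inner_le_norm (latt d k) (x - y)
  rw [h2]
  nlinarith [Real.pi_pos, h3, abs_nonneg (inner ℝ (latt d k) (x - y) : ℝ)]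

lemma tl_periodic (d : ℕ) (k k' : Fin d → ℤ) (x : E d) :
    tl d k (x + latt d k') = tl d k x + (↑(∑ i, k i * k' i) : ℝ) * (2*π) := by
  have h : ∀ i, (x + latt d k') i = x i + (k' i : ℝ) := fun i => by simp [latt]
  simp only [tl, h]
  rw [show (∑ i, (k i:ℝ) * (x i + (k' i:ℝ))) = (∑ i, (k i:ℝ) * x i) + ∑ i, (k i:ℝ)*(k' i:ℝ) by
    rw [← Finset.sum_add_distrib]; apply Finset.sum_congr rfl; intro i _; ring]
  push_cast
  ring

/-- Test functions from 1-Lipschitz 2π-periodic profiles. -/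
lemma psi_good (d : ℕ) (k : Fin d → ℤ) (hk : k ≠ 0) (F : ℝ → ℝ)
    (hF1 : ∀ a b, |F a - F b| ≤ |a - b|)
    (hFp : ∀ (x : ℝ) (n : ℤ), F (x + (n:ℝ) * (2*π)) = F x) :
    LipschitzWith 1 (fun x => (2*π*‖latt d k‖)⁻¹ * F (tl d k x)) ∧
      IsPeriodic d (fun x => (2*π*‖latt d k‖)⁻¹ * F (tl d k x)) := by
  have hw : (0:ℝ) < 2*π*‖latt d k‖ := by
    have := one_le_norm_latt hk; positivity
  constructor
  · refine LipschitzWith.of_dist_le_mul fun x y => ?_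
    rw [NNReal.coe_one, one_mul, Real.dist_eq, dist_eq_norm]
    have h1 : |(2*π*‖latt d k‖)⁻¹ * F (tl d k x) - (2*π*‖latt d k‖)⁻¹ * F (tl d k y)|
        = (2*π*‖latt d k‖)⁻¹ * |F (tl d k x) - F (tl d k y)| := by
      rw [← mul_sub, abs_mul, abs_of_nonneg (le_of_lt (inv_pos.2 hw))]
    rw [h1]
    have h2 := le_trans (hF1 _ _) (tl_sub d k x y)
    calc (2*π*‖latt d k‖)⁻¹ * |F (tl d k x) - F (tl d k y)|
        ≤ (2*π*‖latt d k‖)⁻¹ * (2*π*‖latt d k‖ * ‖x - y‖) :=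
          mul_le_mul_of_nonneg_left h2 (le_of_lt (inv_pos.2 hw))
      _ = ‖x - y‖ := by field_simp [(lt_of_lt_of_le one_pos (one_le_norm_latt hk)).ne']
  · intro x k'
    simp only
    rw [tl_periodic, hFp]

lemma integrand_eq (d : ℕ) (k : Fin d → ℤ) (x : E d) :
    Complex.exp (-(2 * π * Complex.I) * (∑ i, (k i : ℂ) * (x i : ℂ)))
      = ↑(Real.cos (tl d k x)) - ↑(Real.sin (tl d k x)) * Complex.I := by
  have h : (-(2 * (π:ℂ) * Complex.I) * (∑ i, (k i : ℂ) * (x i : ℂ)))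
      = (↑(-(tl d k x)) : ℂ) * Complex.I := by
    push_cast [tl]
    ring
  rw [h, Complex.exp_mul_I, ← Complex.ofReal_cos, ← Complex.ofReal_sin, Real.cos_neg,
    Real.sin_neg]
  push_cast
  ring

lemma fcoeffM_eq (d : ℕ) (k : Fin d → ℤ) (μ : Measure (E d)) [IsProbabilityMeasure μ] :
    fcoeffM d μ k
      = ↑(∫ x, Real.cos (tl d k x) ∂μ) - ↑(∫ x, Real.sin (tl d k x) ∂μ) * Complex.I := by
  have hc : Integrable (fun x => (Real.cos (tl d k x) : ℂ)) μ := by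
    refine Integrable.mono' (integrable_const 1)
      (Continuous.aestronglyMeasurable
        (Complex.continuous_ofReal.comp (Real.continuous_cos.comp (tl_cont d k))))
      (ae_of_all _ fun x => ?_)
    rw [Complex.norm_real, Real.norm_eq_abs]
    exact Real.abs_cos_le_one _
  have hs : Integrable (fun x => (Real.sin (tl d k x) : ℂ) * Complex.I) μ := by
    refine Integrable.mono' (integrable_const 1)
      (Continuous.aestronglyMeasurable
        ((Complex.continuous_ofReal.comp (Real.continuous_sin.comp (tl_cont d k))).mul
          continuous_const))
      (ae_of_all _ fun x => ?_)
    rw [norm_mul, Complex.norm_I, mul_one, Complex.norm_real, Real.norm_eq_abs]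
    exact Real.abs_sin_le_one _
  rw [fcoeffM]
  simp_rw [integrand_eq]
  rw [integral_sub hc hs, integral_mul_const]
  have e1 : ∫ (a : E d), (↑(Real.cos (tl d k a)) : ℂ) ∂μ = ↑(∫ x, Real.cos (tl d k x) ∂μ) :=
    integral_ofReal
  have e2 : ∫ (a : E d), (↑(Real.sin (tl d k a)) : ℂ) ∂μ = ↑(∫ x, Real.sin (tl d k x) ∂μ) :=
    integral_ofReal
  rw [e1, e2]

lemma mem_box_norm_le {d : ℕ} {x : E d} (hx : x ∈ Box d) : ‖x‖ ≤ Real.sqrt d := by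
  rw [EuclideanSpace.norm_eq]
  apply Real.sqrt_le_sqrt
  have h : ∀ i, ‖x i‖^2 ≤ 1 := fun i => by
    have h1 := (hx i).1
    have h2 := (hx i).2
    rw [Real.norm_eq_abs, sq_abs]
    nlinarith
  calc ∑ i, ‖x i‖^2 ≤ ∑ _i : Fin d, (1:ℝ) := Finset.sum_le_sum fun i _ => h i
    _ = d := by simp

lemma ae_box {d : ℕ} {μ : Measure (E d)} (hμs : μ (Box d)ᶜ = 0) : ∀ᵐ x ∂μ, x ∈ Box d := by
  rw [ae_iff]
  exact hμs

lemma lip_abs_sub {d : ℕ} {ψ : E d → ℝ} (hψ : LipschitzWith 1 ψ) (x : E d) :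
    |ψ x - ψ 0| ≤ ‖x‖ := by
  have h1 := hψ.dist_le_mul x 0
  rw [NNReal.coe_one, one_mul, Real.dist_eq] at h1
  simpa [dist_eq_norm] using h1

lemma integrable_lip {d : ℕ} (μ : Measure (E d)) [IsProbabilityMeasure μ]
    (hμs : μ (Box d)ᶜ = 0) (ψ : E d → ℝ) (hψ : LipschitzWith 1 ψ) : Integrable ψ μ := by
  refine Integrable.mono' (integrable_const (|ψ 0| + Real.sqrt d))
    hψ.continuous.aestronglyMeasurable ((ae_box hμs).mono fun x hx => ?_)
  have h1 := lip_abs_sub hψ x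
  have h3 := mem_box_norm_le hx
  rw [Real.norm_eq_abs]
  have h4 := abs_sub_abs_le_abs_sub (ψ x) (ψ 0)
  linarith

lemma diff_integral_le {d : ℕ} (μ ν : Measure (E d)) [IsProbabilityMeasure μ]
    [IsProbabilityMeasure ν] (hμs : μ (Box d)ᶜ = 0) (hνs : ν (Box d)ᶜ = 0)
    (ψ : E d → ℝ) (hψ : LipschitzWith 1 ψ) :
    |(∫ x, ψ x ∂μ) - ∫ x, ψ x ∂ν| ≤ 2 * Real.sqrt d := by
  have key : ∀ (ρ : Measure (E d)), IsProbabilityMeasure ρ → ρ (Box d)ᶜ = 0 →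
      |(∫ x, ψ x ∂ρ) - ψ 0| ≤ Real.sqrt d := by
    intro ρ hρ hρs
    have hint := integrable_lip ρ hρs ψ hψ
    have h1 : (∫ x, ψ x ∂ρ) - ψ 0 = ∫ x, (ψ x - ψ 0) ∂ρ := by
      rw [integral_sub hint (integrable_const _), integral_const]
      simp
    rw [h1]
    have h2 := norm_integral_le_of_norm_le_const (μ := ρ)
      (f := fun x => ψ x - ψ 0) (C := Real.sqrt d)
      ((ae_box hρs).mono fun x hx => by
        rw [Real.norm_eq_abs]
        exact le_trans (lip_abs_sub hψ x) (mem_box_norm_le hx))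
    rw [Real.norm_eq_abs] at h2
    simpa using h2
  have hA := key μ inferInstance hμs
  have hB := key ν inferInstance hνs
  have h3 := abs_sub_le (∫ x, ψ x ∂μ) (ψ 0) (∫ x, ψ x ∂ν)
  rw [abs_sub_comm (ψ 0) (∫ x, ψ x ∂ν)] at h3
  linarith

lemma bdd {d : ℕ} (μ ν : Measure (E d)) [IsProbabilityMeasure μ] [IsProbabilityMeasure ν]
    (hμs : μ (Box d)ᶜ = 0) (hνs : ν (Box d)ᶜ = 0) :
    BddAbove (Set.range fun ψ : {ψ : E d → ℝ // LipschitzWith 1 ψ ∧ IsPeriodic d ψ} =>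
      |(∫ x, ψ.1 x ∂μ) - ∫ x, ψ.1 x ∂ν|) := by
  refine ⟨2 * Real.sqrt d, ?_⟩
  rintro y ⟨ψ, rfl⟩
  exact diff_integral_le μ ν hμs hνs ψ.1 ψ.2.1

lemma test_le {d : ℕ} (μ ν : Measure (E d)) [IsProbabilityMeasure μ] [IsProbabilityMeasure ν]
    (hμs : μ (Box d)ᶜ = 0) (hνs : ν (Box d)ᶜ = 0) (ψ : E d → ℝ)
    (h1 : LipschitzWith 1 ψ) (h2 : IsPeriodic d ψ) :
    |(∫ x, ψ x ∂μ) - ∫ x, ψ x ∂ν| ≤ wassT d μ ν :=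
  le_ciSup (bdd μ ν hμs hνs) ⟨ψ, h1, h2⟩

lemma wass_nonneg {d : ℕ} (μ ν : Measure (E d)) [IsProbabilityMeasure μ]
    [IsProbabilityMeasure ν] (hμs : μ (Box d)ᶜ = 0) (hνs : ν (Box d)ᶜ = 0) :
    0 ≤ wassT d μ ν := by
  have h0 : LipschitzWith 1 (fun _ : E d => (0:ℝ)) :=
    (LipschitzWith.const (0:ℝ)).weaken zero_le_one
  have := test_le μ ν hμs hνs _ h0 (fun x k => rfl)
  simpa using this

lemma key_bound (d : ℕ) (k : Fin d → ℤ) (hk : k ≠ 0) (μ ν : Measure (E d))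
    [IsProbabilityMeasure μ] [IsProbabilityMeasure ν]
    (hμs : μ (Box d)ᶜ = 0) (hνs : ν (Box d)ᶜ = 0) :
    ‖fcoeffM d μ k - fcoeffM d ν k‖ ≤ 2 * (2*π*‖latt d k‖) * wassT d μ ν := by
  have hn := one_le_norm_latt hk
  have hw : (0:ℝ) < 2*π*‖latt d k‖ := by positivity
  have main : ∀ (F : ℝ → ℝ), (∀ a b, |F a - F b| ≤ |a - b|) →
      (∀ (x : ℝ) (n : ℤ), F (x + (n:ℝ) * (2*π)) = F x) →
      |(∫ x, F (tl d k x) ∂μ) - ∫ x, F (tl d k x) ∂ν|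
        ≤ (2*π*‖latt d k‖) * wassT d μ ν := by
    intro F hF1 hFp
    obtain ⟨hL, hP⟩ := psi_good d k hk F hF1 hFp
    have ht := test_le μ ν hμs hνs _ hL hP
    have e1 : (∫ x, (2*π*‖latt d k‖)⁻¹ * F (tl d k x) ∂μ)
        = (2*π*‖latt d k‖)⁻¹ * ∫ x, F (tl d k x) ∂μ := integral_const_mul _ _
    have e2 : (∫ x, (2*π*‖latt d k‖)⁻¹ * F (tl d k x) ∂ν)
        = (2*π*‖latt d k‖)⁻¹ * ∫ x, F (tl d k x) ∂ν := integral_const_mul _ _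
    rw [e1, e2, ← mul_sub, abs_mul, abs_of_nonneg (inv_nonneg.2 hw.le)] at ht
    calc |(∫ x, F (tl d k x) ∂μ) - ∫ x, F (tl d k x) ∂ν|
        = (2*π*‖latt d k‖) * ((2*π*‖latt d k‖)⁻¹
            * |(∫ x, F (tl d k x) ∂μ) - ∫ x, F (tl d k x) ∂ν|) := by
          field_simp
      _ ≤ (2*π*‖latt d k‖) * wassT d μ ν := mul_le_mul_of_nonneg_left ht hw.le
  have hcos := main Real.cos abs_cos_sub_cos (fun x n => Real.cos_add_int_mul_two_pi x n)
  have hsin := main Real.sin abs_sin_sub_sin (fun x n => Real.sin_add_int_mul_two_pi x n)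
  rw [fcoeffM_eq d k μ, fcoeffM_eq d k ν]
  have hcomb : ((↑(∫ x, Real.cos (tl d k x) ∂μ) : ℂ)
        - ↑(∫ x, Real.sin (tl d k x) ∂μ) * Complex.I)
      - ((↑(∫ x, Real.cos (tl d k x) ∂ν) : ℂ)
        - ↑(∫ x, Real.sin (tl d k x) ∂ν) * Complex.I)
      = ↑((∫ x, Real.cos (tl d k x) ∂μ) - ∫ x, Real.cos (tl d k x) ∂ν)
        - ↑((∫ x, Real.sin (tl d k x) ∂μ) - ∫ x, Real.sin (tl d k x) ∂ν) * Complex.I := by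
    push_cast
    ring
  rw [hcomb]
  refine le_trans (norm_sub_le _ _) ?_
  rw [norm_mul, Complex.norm_I, mul_one, Complex.norm_real, Complex.norm_real,
    Real.norm_eq_abs, Real.norm_eq_abs]
  linarith

lemma finite_small (d : ℕ) (K : ℝ) :
    {q : {k : Fin d → ℤ // k ≠ 0} | ‖latt d q.1‖ ≤ K}.Finite := by
  have h1 : {x : Fin d → ℤ | ‖latt d x‖ ≤ K}.Finite := by
    apply (Set.finite_Icc (fun _ : Fin d => -⌈K⌉) (fun _ => ⌈K⌉)).subset
    intro x hx
    rw [Set.mem_Icc]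
    have hco : ∀ i, |x i| ≤ ⌈K⌉ := by
      intro i
      have h2 : |latt d x i| ≤ ‖latt d x‖ := abs_apply_le_norm _ i
      have h3 : ((|x i| : ℤ) : ℝ) ≤ ((⌈K⌉ : ℤ) : ℝ) := by
        rw [Int.cast_abs]
        calc |(x i : ℝ)| = |latt d x i| := by simp [latt]
          _ ≤ K := le_trans h2 hx
          _ ≤ ⌈K⌉ := Int.le_ceil K
      exact_mod_cast h3
    exact ⟨fun i => (abs_le.1 (hco i)).1, fun i => (abs_le.1 (hco i)).2⟩
  exact h1.preimage Subtype.val_injective.injOn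

end S6


set_option maxHeartbeats 1000000 in
/-- **Interpolation between Wasserstein distance and enstrophy.** For probability measures
`μ, ν` on the torus with finite `Ḣ^{1+(s-d)/2}` norms there are a universal `C > 0` and,
for every sufficiently small `δ > 0`, a constant `C_δ > 0` with
`‖μ-ν‖_{Ḣ^{(s-d)/2}}² ≤ C_δ d(μ,ν)² + C δ (‖μ‖_{Ḣ^{1+(s-d)/2}}² + ‖ν‖_{Ḣ^{1+(s-d)/2}}² + 1)`. -/
theorem stmt6 (d : ℕ) (s : ℝ) (hd : 3 ≤ d) (hs : 0 ≤ s) (hs' : s < (d : ℝ) - 2) :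
    ∃ C > 0, ∃ δ₀ > 0, ∀ δ : ℝ, 0 < δ → δ < δ₀ → ∃ Cδ > 0,
      ∀ μ ν : Measure (E d), IsProbabilityMeasure μ → IsProbabilityMeasure ν →
        μ (Box d)ᶜ = 0 → ν (Box d)ᶜ = 0 →
        Summable (fun k : {k : Fin d → ℤ // k ≠ 0} =>
          (2 * π * ‖latt d k.1‖) ^ (2 * (1 + (s - (d : ℝ)) / 2)) * ‖fcoeffM d μ k.1‖ ^ 2) →
        Summable (fun k : {k : Fin d → ℤ // k ≠ 0} =>
          (2 * π * ‖latt d k.1‖) ^ (2 * (1 + (s - (d : ℝ)) / 2)) * ‖fcoeffM d ν k.1‖ ^ 2) →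
        sobSqC d ((s - (d : ℝ)) / 2) (fun k => fcoeffM d μ k - fcoeffM d ν k)
          ≤ Cδ * (wassT d μ ν) ^ 2
            + C * δ * (sobSqM d (1 + (s - (d : ℝ)) / 2) μ
                + sobSqM d (1 + (s - (d : ℝ)) / 2) ν + 1) := by
  refine ⟨1, one_pos, 1, one_pos, fun δ hδ hδ1 => ?_⟩
  have hKpos : (0:ℝ) < Real.sqrt (1/δ) := Real.sqrt_pos.2 (by positivity)
  set K : ℝ := Real.sqrt (1/δ) with hKdef
  have hK2 : K^2 = 1/δ := Real.sq_sqrt (by positivity)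
  have hfin := S6.finite_small d K
  refine ⟨4 * (hfin.toFinset.card : ℝ) + 1, by positivity,
    fun μ ν hμ hν hμs hνs hsμ hsν => ?_⟩
  have hπ := Real.pi_gt_three
  have he1 : 2*((s-(d:ℝ))/2) = s-(d:ℝ) := by ring
  have he2 : 2*(1+(s-(d:ℝ))/2) = s-(d:ℝ)+2 := by ring
  simp only [sobSqC, sobSqM, he1, he2] at hsμ hsν ⊢
  have hW0 : 0 ≤ wassT d μ ν := S6.wass_nonneg μ ν hμs hνs
  have hkey : ∀ q : {k : Fin d → ℤ // k ≠ 0},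
      (2*π*‖latt d q.1‖) ^ (s-(d:ℝ)) * ‖fcoeffM d μ q.1 - fcoeffM d ν q.1‖^2
      ≤ (if ‖latt d q.1‖ ≤ K then 4*(wassT d μ ν)^2 else 0)
        + (((2*π*K)^2)⁻¹ * 2) *
          ((2*π*‖latt d q.1‖) ^ (s-(d:ℝ)+2) * ‖fcoeffM d μ q.1‖^2
            + (2*π*‖latt d q.1‖) ^ (s-(d:ℝ)+2) * ‖fcoeffM d ν q.1‖^2) := by
    intro q
    have hn1 := S6.one_le_norm_latt q.2
    have hw0 : (0:ℝ) < 2*π*‖latt d q.1‖ := by positivity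
    have hw1 : (1:ℝ) ≤ 2*π*‖latt d q.1‖ := by nlinarith
    have hrw : (2*π*‖latt d q.1‖) ^ (s-(d:ℝ)+2)
        = (2*π*‖latt d q.1‖) ^ (s-(d:ℝ)) * (2*π*‖latt d q.1‖)^2 := by
      rw [Real.rpow_add hw0, show ((2:ℝ)) = ((2:ℕ):ℝ) by norm_num, Real.rpow_natCast]
    by_cases hsmall : ‖latt d q.1‖ ≤ K
    · rw [if_pos hsmall]
      have hdiff := S6.key_bound d q.1 q.2 μ ν hμs hνs
      have hsq : ‖fcoeffM d μ q.1 - fcoeffM d ν q.1‖^2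
          ≤ (2*(2*π*‖latt d q.1‖)*(wassT d μ ν))^2 :=
        pow_le_pow_left₀ (norm_nonneg _) hdiff 2
      have hme : (2*π*‖latt d q.1‖) ^ (s-(d:ℝ)+2) ≤ 1 :=
        Real.rpow_le_one_of_one_le_of_nonpos hw1 (by linarith)
      have hrest : 0 ≤ (((2*π*K)^2)⁻¹ * 2) *
          ((2*π*‖latt d q.1‖) ^ (s-(d:ℝ)+2) * ‖fcoeffM d μ q.1‖^2
            + (2*π*‖latt d q.1‖) ^ (s-(d:ℝ)+2) * ‖fcoeffM d ν q.1‖^2) := by positivity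
      have hle : (2*π*‖latt d q.1‖) ^ (s-(d:ℝ)) * ‖fcoeffM d μ q.1 - fcoeffM d ν q.1‖^2
          ≤ 4*(wassT d μ ν)^2 := by
        calc (2*π*‖latt d q.1‖) ^ (s-(d:ℝ)) * ‖fcoeffM d μ q.1 - fcoeffM d ν q.1‖^2
            ≤ (2*π*‖latt d q.1‖) ^ (s-(d:ℝ)) * (2*(2*π*‖latt d q.1‖)*(wassT d μ ν))^2 :=
              mul_le_mul_of_nonneg_left hsq (Real.rpow_nonneg hw0.le _)
          _ = 4 * ((2*π*‖latt d q.1‖) ^ (s-(d:ℝ)) * (2*π*‖latt d q.1‖)^2)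
                * (wassT d μ ν)^2 := by ring
          _ = 4 * (2*π*‖latt d q.1‖) ^ (s-(d:ℝ)+2) * (wassT d μ ν)^2 := by rw [← hrw]
          _ ≤ 4 * 1 * (wassT d μ ν)^2 := by
              apply mul_le_mul_of_nonneg_right _ (sq_nonneg _)
              nlinarith
          _ = 4*(wassT d μ ν)^2 := by ring
      linarith
    · rw [if_neg hsmall, zero_add]
      have hKlt : K ≤ ‖latt d q.1‖ := (not_le.1 hsmall).le
      have hd2 : ‖fcoeffM d μ q.1 - fcoeffM d ν q.1‖^2
          ≤ 2*‖fcoeffM d μ q.1‖^2 + 2*‖fcoeffM d ν q.1‖^2 := by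
        have h := norm_sub_le (fcoeffM d μ q.1) (fcoeffM d ν q.1)
        have h2 : ‖fcoeffM d μ q.1 - fcoeffM d ν q.1‖^2
            ≤ (‖fcoeffM d μ q.1‖ + ‖fcoeffM d ν q.1‖)^2 :=
          pow_le_pow_left₀ (norm_nonneg _) h 2
        nlinarith [sq_nonneg (‖fcoeffM d μ q.1‖ - ‖fcoeffM d ν q.1‖)]
      have hKw : (2*π*K) ≤ 2*π*‖latt d q.1‖ := by nlinarith
      have hK0 : (0:ℝ) < 2*π*K := by positivity
      have hinv : ((2*π*‖latt d q.1‖)^2)⁻¹ ≤ ((2*π*K)^2)⁻¹ := by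
        apply inv_anti₀ (by positivity) (by nlinarith)
      have hwe : (2*π*‖latt d q.1‖) ^ (s-(d:ℝ))
          = (2*π*‖latt d q.1‖) ^ (s-(d:ℝ)+2) * ((2*π*‖latt d q.1‖)^2)⁻¹ := by
        rw [hrw]
        field_simp
      calc (2*π*‖latt d q.1‖) ^ (s-(d:ℝ)) * ‖fcoeffM d μ q.1 - fcoeffM d ν q.1‖^2
          ≤ (2*π*‖latt d q.1‖) ^ (s-(d:ℝ))
              * (2*‖fcoeffM d μ q.1‖^2 + 2*‖fcoeffM d ν q.1‖^2) :=
            mul_le_mul_of_nonneg_left hd2 (Real.rpow_nonneg hw0.le _)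
        _ = ((2*π*‖latt d q.1‖) ^ (s-(d:ℝ)+2) * ((2*π*‖latt d q.1‖)^2)⁻¹)
              * (2*‖fcoeffM d μ q.1‖^2 + 2*‖fcoeffM d ν q.1‖^2) := by rw [← hwe]
        _ ≤ ((2*π*‖latt d q.1‖) ^ (s-(d:ℝ)+2) * ((2*π*K)^2)⁻¹)
              * (2*‖fcoeffM d μ q.1‖^2 + 2*‖fcoeffM d ν q.1‖^2) := by
            apply mul_le_mul_of_nonneg_right
              (mul_le_mul_of_nonneg_left hinv (Real.rpow_nonneg hw0.le _)) (by positivity)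
        _ = (((2*π*K)^2)⁻¹ * 2) *
              ((2*π*‖latt d q.1‖) ^ (s-(d:ℝ)+2) * ‖fcoeffM d μ q.1‖^2
                + (2*π*‖latt d q.1‖) ^ (s-(d:ℝ)+2) * ‖fcoeffM d ν q.1‖^2) := by ring
  have hvanish : ∀ q : {k : Fin d → ℤ // k ≠ 0}, q ∉ hfin.toFinset →
      (if ‖latt d q.1‖ ≤ K then 4*(wassT d μ ν)^2 else 0) = 0 := by
    intro q hq
    rw [Set.Finite.mem_toFinset] at hq
    exact if_neg hq
  have hp_sum : Summable (fun q : {k : Fin d → ℤ // k ≠ 0} =>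
      if ‖latt d q.1‖ ≤ K then 4*(wassT d μ ν)^2 else 0) :=
    summable_of_ne_finset_zero hvanish
  have hb_sum : Summable (fun q : {k : Fin d → ℤ // k ≠ 0} =>
      (((2*π*K)^2)⁻¹ * 2) *
        ((2*π*‖latt d q.1‖) ^ (s-(d:ℝ)+2) * ‖fcoeffM d μ q.1‖^2
          + (2*π*‖latt d q.1‖) ^ (s-(d:ℝ)+2) * ‖fcoeffM d ν q.1‖^2)) :=
    (hsμ.add hsν).mul_left _
  have hf0 : ∀ q : {k : Fin d → ℤ // k ≠ 0},
      0 ≤ (2*π*‖latt d q.1‖) ^ (s-(d:ℝ)) * ‖fcoeffM d μ q.1 - fcoeffM d ν q.1‖^2 := by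
    intro q
    have hn1 := S6.one_le_norm_latt q.2
    positivity
  have hf_sum : Summable (fun q : {k : Fin d → ℤ // k ≠ 0} =>
      (2*π*‖latt d q.1‖) ^ (s-(d:ℝ)) * ‖fcoeffM d μ q.1 - fcoeffM d ν q.1‖^2) :=
    Summable.of_nonneg_of_le hf0 hkey (hp_sum.add hb_sum)
  have hSμ0 : 0 ≤ ∑' q : {k : Fin d → ℤ // k ≠ 0},
      (2*π*‖latt d q.1‖) ^ (s-(d:ℝ)+2) * ‖fcoeffM d μ q.1‖^2 :=
    tsum_nonneg fun q => mul_nonneg (Real.rpow_nonneg (by positivity) _)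
      (pow_nonneg (norm_nonneg _) 2)
  have hSν0 : 0 ≤ ∑' q : {k : Fin d → ℤ // k ≠ 0},
      (2*π*‖latt d q.1‖) ^ (s-(d:ℝ)+2) * ‖fcoeffM d ν q.1‖^2 :=
    tsum_nonneg fun q => mul_nonneg (Real.rpow_nonneg (by positivity) _)
      (pow_nonneg (norm_nonneg _) 2)
  have hBδ : ((2*π*K)^2)⁻¹ * 2 ≤ δ := by
    have h1 : (2*π*K)^2 = 4*π^2*(1/δ) := by rw [show (2*π*K)^2 = 4*π^2*K^2 by ring, hK2]
    rw [h1]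
    rw [show (4*π^2*(1/δ))⁻¹ * 2 = δ / (2*π^2) by field_simp; ring]
    apply div_le_self hδ.le
    nlinarith
  calc ∑' q : {k : Fin d → ℤ // k ≠ 0},
        (2*π*‖latt d q.1‖) ^ (s-(d:ℝ)) * ‖fcoeffM d μ q.1 - fcoeffM d ν q.1‖^2
      ≤ ∑' q : {k : Fin d → ℤ // k ≠ 0},
        ((if ‖latt d q.1‖ ≤ K then 4*(wassT d μ ν)^2 else 0)
          + (((2*π*K)^2)⁻¹ * 2) *
            ((2*π*‖latt d q.1‖) ^ (s-(d:ℝ)+2) * ‖fcoeffM d μ q.1‖^2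
              + (2*π*‖latt d q.1‖) ^ (s-(d:ℝ)+2) * ‖fcoeffM d ν q.1‖^2)) :=
        Summable.tsum_le_tsum hkey hf_sum (hp_sum.add hb_sum)
    _ = (∑' q : {k : Fin d → ℤ // k ≠ 0},
          if ‖latt d q.1‖ ≤ K then 4*(wassT d μ ν)^2 else 0)
        + ∑' q : {k : Fin d → ℤ // k ≠ 0},
          (((2*π*K)^2)⁻¹ * 2) *
            ((2*π*‖latt d q.1‖) ^ (s-(d:ℝ)+2) * ‖fcoeffM d μ q.1‖^2
              + (2*π*‖latt d q.1‖) ^ (s-(d:ℝ)+2) * ‖fcoeffM d ν q.1‖^2) :=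
        Summable.tsum_add hp_sum hb_sum
    _ ≤ (hfin.toFinset.card : ℝ) * (4*(wassT d μ ν)^2)
        + (((2*π*K)^2)⁻¹ * 2) *
          ((∑' q : {k : Fin d → ℤ // k ≠ 0},
              (2*π*‖latt d q.1‖) ^ (s-(d:ℝ)+2) * ‖fcoeffM d μ q.1‖^2)
            + ∑' q : {k : Fin d → ℤ // k ≠ 0},
              (2*π*‖latt d q.1‖) ^ (s-(d:ℝ)+2) * ‖fcoeffM d ν q.1‖^2) := by
        have e1 : (∑' q : {k : Fin d → ℤ // k ≠ 0},
            if ‖latt d q.1‖ ≤ K then 4*(wassT d μ ν)^2 else 0)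
            = ∑ q ∈ hfin.toFinset,
              (if ‖latt d q.1‖ ≤ K then 4*(wassT d μ ν)^2 else 0) := tsum_eq_sum hvanish
        have e2 : (∑ q ∈ hfin.toFinset,
            (if ‖latt d q.1‖ ≤ K then 4*(wassT d μ ν)^2 else 0))
            ≤ hfin.toFinset.card • (4*(wassT d μ ν)^2) := by
          apply Finset.sum_le_card_nsmul
          intro q hq
          split
          · exact le_rfl
          · positivity
        rw [nsmul_eq_mul] at e2
        have e3 : (∑' q : {k : Fin d → ℤ // k ≠ 0},
            (((2*π*K)^2)⁻¹ * 2) *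
              ((2*π*‖latt d q.1‖) ^ (s-(d:ℝ)+2) * ‖fcoeffM d μ q.1‖^2
                + (2*π*‖latt d q.1‖) ^ (s-(d:ℝ)+2) * ‖fcoeffM d ν q.1‖^2))
            = (((2*π*K)^2)⁻¹ * 2) *
              ((∑' q : {k : Fin d → ℤ // k ≠ 0},
                  (2*π*‖latt d q.1‖) ^ (s-(d:ℝ)+2) * ‖fcoeffM d μ q.1‖^2)
                + ∑' q : {k : Fin d → ℤ // k ≠ 0},
                  (2*π*‖latt d q.1‖) ^ (s-(d:ℝ)+2) * ‖fcoeffM d ν q.1‖^2) := by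
          rw [tsum_mul_left, Summable.tsum_add hsμ hsν]
        rw [e1, e3]
        exact add_le_add e2 le_rfl
    _ ≤ (4 * (hfin.toFinset.card : ℝ) + 1) * (wassT d μ ν)^2
        + 1 * δ * ((∑' q : {k : Fin d → ℤ // k ≠ 0},
              (2*π*‖latt d q.1‖) ^ (s-(d:ℝ)+2) * ‖fcoeffM d μ q.1‖^2)
            + (∑' q : {k : Fin d → ℤ // k ≠ 0},
              (2*π*‖latt d q.1‖) ^ (s-(d:ℝ)+2) * ‖fcoeffM d ν q.1‖^2) + 1) := by
        have hBpos : 0 ≤ ((2*π*K)^2)⁻¹ * 2 := by positivity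
        nlinarith [sq_nonneg (wassT d μ ν), hSμ0, hSν0, hBδ, hδ,
          mul_le_mul_of_nonneg_right hBδ (add_nonneg hSμ0 hSν0)]
end
end

section
/- Let $s \in [0, d-2)$, $0 < \alpha < \min(d-2-s, 2)$, and $g$ the periodic Riesz potential with parameter $s$ and $g_\delta$ its truncation at scale $\delta$. Then there exists $C > 0$ such that for all sufficiently small $\delta > 0$ and all $x \in \mathbb{T}^d\setminus\{0\}$: $|g(x) - g_\delta(x)| \leq C\delta^{\alpha/2}\big( (-\Delta)^{\alpha/2} g(x) + C \big)$. -/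
open MeasureTheory Filter ENNReal RealInnerProductSpace Real
noncomputable section

/-- **Comparison of the truncation error with a fractional Laplacian of `g`.** For
`0 < α < min(d-2-s, 2)` and `g_δ(x) = (1 - χ(x/δ)) g(x)`, there is `C > 0` such that for all
sufficiently small `δ > 0` and all `x ∈ 𝕋^d \ {0}`,
`|g(x) - g_δ(x)| ≤ C δ^{α/2} ((-Δ)^{α/2} g(x) + C)`, where `(-Δ)^{α/2} g` is (a positive
multiple of) the periodic Riesz potential of parameter `s + α`, hence with an
`|x|^{-(s+α)}` singularity at the origin up to a smooth correction, and bounded below. -/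
theorem stmt18 (d : ℕ) (s α : ℝ) (hd : 3 ≤ d) (hs : 0 ≤ s)
    (hα : 0 < α) (hα' : α < min ((d : ℝ) - 2 - s) 2)
    (g G2 : E d → ℝ) (hg : IsRieszPotential d s g) (hgsing : HasRieszSingularity d s g)
    (hfrac : IsFracPow d α g G2)
    (hG2per : IsPeriodic d G2)
    (hG2sing : ∃ (c' : ℝ) (h2 : E d → ℝ), 0 < c' ∧
      ContDiffOn ℝ (⊤ : ℕ∞) h2 (Metric.ball (0 : E d) (1 / 4)) ∧
      ∀ x ∈ Metric.ball (0 : E d) (1 / 4), x ≠ 0 → G2 x = c' * ‖x‖ ^ (-(s + α)) + h2 x)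
    (hG2bdd : ∃ B : ℝ, ∀ x, -B ≤ G2 x)
    (χ : E d → ℝ) (hχsm : ContDiff ℝ (⊤ : ℕ∞) χ)
    (hχ1 : ∀ x : E d, ‖x‖ ≤ 1 / 2 → χ x = 1) (hχ0 : ∀ x : E d, 1 ≤ ‖x‖ → χ x = 0)
    (hχrange : ∀ x : E d, 0 ≤ χ x ∧ χ x ≤ 1) :
    ∃ C > 0, ∃ δ₀ > 0, ∀ δ : ℝ, 0 < δ → δ < δ₀ →
      ∀ x : E d, x ≠ 0 → x ∈ Box d →
        |g x - (1 - χ (δ⁻¹ • x)) * g x| ≤ C * δ ^ (α / 2) * (G2 x + C) := by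
  
  classical
  obtain ⟨c', h2, hc', hh2sm, hh2⟩ := hG2sing
  obtain ⟨h, hhsm, hh⟩ := hgsing
  obtain ⟨B, hB⟩ := hG2bdd
  have hsub : Metric.closedBall (0 : E d) (1/8) ⊆ Metric.ball (0 : E d) (1/4) :=
    Metric.closedBall_subset_ball (by norm_num)
  obtain ⟨M1, hM1⟩ := (isCompact_closedBall (0 : E d) (1/8)).exists_bound_of_continuousOn
    (hhsm.continuousOn.mono hsub)
  obtain ⟨M2, hM2⟩ := (isCompact_closedBall (0 : E d) (1/8)).exists_bound_of_continuousOn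
    (hh2sm.continuousOn.mono hsub)
  have h0mem : (0 : E d) ∈ Metric.closedBall (0 : E d) (1/8) :=
    Metric.mem_closedBall_self (by norm_num)
  have hM1nn : 0 ≤ M1 := le_trans (norm_nonneg _) (hM1 0 h0mem)
  have hM2nn : 0 ≤ M2 := le_trans (norm_nonneg _) (hM2 0 h0mem)
  set K : ℝ := max 1 (2/α) with hKdef
  have hK1 : (1:ℝ) ≤ K := le_max_left _ _
  have hKα : 2/α ≤ K := le_max_right _ _
  have hK0 : 0 < K := lt_of_lt_of_le one_pos hK1
  set C₁ : ℝ := max (max (K / c') M2) B with hC₁def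
  have hC₁Kc : K / c' ≤ C₁ := le_trans (le_max_left _ _) (le_max_left _ _)
  have hC₁M2 : M2 ≤ C₁ := le_trans (le_max_right _ _) (le_max_left _ _)
  have hC₁B : B ≤ C₁ := le_max_right _ _
  have hC₁0 : 0 < C₁ := lt_of_lt_of_le (div_pos hK0 hc') hC₁Kc
  refine ⟨C₁ + 1, by linarith, min (1/8) ((c' / (M1 + 1)) ^ (2/α)), ?_, ?_⟩
  · exact lt_min (by norm_num) (Real.rpow_pos_of_pos (div_pos hc' (by linarith)) _)
  intro δ hδ0 hδδ₀ x hx0 _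
  have hδ18 : δ < 1/8 := lt_of_lt_of_le hδδ₀ (min_le_left _ _)
  have hδ1 : δ ≤ 1 := by linarith
  have hP : 0 < δ ^ (α/2) := Real.rpow_pos_of_pos hδ0 _
  set P : ℝ := δ ^ (α/2) with hPdef
  by_cases hxδ : δ ≤ ‖x‖
  · -- far region: χ = 0
    have hχz : χ (δ⁻¹ • x) = 0 := by
      apply hχ0
      have : ‖δ⁻¹ • x‖ = δ⁻¹ * ‖x‖ := by
        rw [norm_smul, Real.norm_eq_abs, abs_of_pos (inv_pos.mpr hδ0)]
      rw [this, ← inv_mul_cancel₀ hδ0.ne']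
      exact mul_le_mul_of_nonneg_left hxδ (inv_nonneg.mpr hδ0.le)
    rw [hχz]
    have hG2C : 0 ≤ G2 x + (C₁ + 1) := by have := hB x; linarith
    have : |g x - (1 - 0) * g x| = 0 := by ring_nf; simp
    rw [this]
    positivity
  · push_neg at hxδ
    have hr : 0 < ‖x‖ := norm_pos_iff.mpr hx0
    have hr1 : ‖x‖ < 1 := by linarith
    have hxball : x ∈ Metric.ball (0 : E d) (1/4) := by
      rw [Metric.mem_ball, dist_zero_right]; linarith
    have hxcb : x ∈ Metric.closedBall (0 : E d) (1/8) := by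
      rw [Metric.mem_closedBall, dist_zero_right]; linarith
    set R : ℝ := ‖x‖ ^ (-(s + α)) with hRdef
    have hRpos : 0 < R := Real.rpow_pos_of_pos hr _
    -- |x|^α ≤ δ^{α/2} and |x|^{α/2} ≤ δ^{α/2}
    have hpow1 : ‖x‖ ^ α ≤ P := by
      calc ‖x‖ ^ α ≤ δ ^ α := Real.rpow_le_rpow (norm_nonneg _) hxδ.le hα.le
        _ ≤ P := Real.rpow_le_rpow_of_exponent_ge hδ0 hδ1 (by linarith)
    have hpow2 : ‖x‖ ^ (α/2) ≤ P :=
      Real.rpow_le_rpow (norm_nonneg _) hxδ.le (by linarith)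
    -- Step B : |g x| ≤ K * (P * R) + M1
    have hB1 : |g x| ≤ K * (P * R) + M1 := by
      have hhx : ‖h x‖ ≤ M1 := hM1 x hxcb
      have hgx := hh x hxball hx0
      by_cases hs0 : 0 < s
      · rw [if_pos hs0] at hgx
        have hsplit : ‖x‖ ^ (-s) = ‖x‖ ^ α * R := by
          rw [hRdef, ← Real.rpow_add hr]; congr 1; ring
        have h1 : ‖x‖ ^ (-s) ≤ P * R := by
          rw [hsplit]; exact mul_le_mul_of_nonneg_right hpow1 hRpos.le
        have h2 : P * R ≤ K * (P * R) :=
          le_mul_of_one_le_left (by positivity) hK1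
        calc |g x| = |‖x‖ ^ (-s) + h x| := by rw [hgx]
          _ ≤ |‖x‖ ^ (-s)| + |h x| := abs_add_le _ _
          _ = ‖x‖ ^ (-s) + |h x| := by rw [abs_of_nonneg (Real.rpow_nonneg (norm_nonneg _) _)]
          _ ≤ K * (P * R) + M1 := by
              have : |h x| ≤ M1 := hhx
              linarith
      · have hs0' : s = 0 := le_antisymm (not_lt.mp hs0) hs
        rw [if_neg hs0] at hgx
        have hlogneg : Real.log ‖x‖ < 0 := Real.log_neg hr hr1
        -- -log ‖x‖ ≤ (2/α) * ‖x‖^(-(α/2))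
        have hlog : -Real.log ‖x‖ ≤ (2/α) * ‖x‖ ^ (-(α/2)) := by
          have := Real.log_le_rpow_div (x := ‖x‖⁻¹) (inv_nonneg.mpr hr.le) (half_pos hα)
          rw [Real.log_inv, ← Real.rpow_neg_one ‖x‖] at this
          have h' : (‖x‖ ^ (-1 : ℝ)) ^ (α/2) = ‖x‖ ^ (-(α/2)) := by
            rw [← Real.rpow_mul (norm_nonneg _)]; congr 1; ring
          rw [h'] at this
          calc -Real.log ‖x‖ ≤ ‖x‖ ^ (-(α/2)) / (α/2) := this
            _ = (2/α) * ‖x‖ ^ (-(α/2)) := by field_simp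
        have hsplit : ‖x‖ ^ (-(α/2)) = ‖x‖ ^ (α/2) * R := by
          rw [hRdef, hs0', ← Real.rpow_add hr]; congr 1; ring
        have h1 : ‖x‖ ^ (-(α/2)) ≤ P * R := by
          rw [hsplit]; exact mul_le_mul_of_nonneg_right hpow2 hRpos.le
        have h2 : (2/α) * (P * R) ≤ K * (P * R) :=
          mul_le_mul_of_nonneg_right hKα (by positivity)
        have h3 : (2/α) * ‖x‖ ^ (-(α/2)) ≤ (2/α) * (P * R) :=
          mul_le_mul_of_nonneg_left h1 (by positivity)
        calc |g x| = |-Real.log ‖x‖ + h x| := by rw [hgx]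
          _ ≤ |-Real.log ‖x‖| + |h x| := abs_add_le _ _
          _ = -Real.log ‖x‖ + |h x| := by rw [abs_neg, abs_of_neg hlogneg]
          _ ≤ K * (P * R) + M1 := by
              have : |h x| ≤ M1 := hM1 x hxcb
              linarith
    -- Step C : c' * R ≤ G2 x + M2
    have hG2lb : c' * R ≤ G2 x + M2 := by
      have hgx2 := hh2 x hxball hx0
      have : ‖h2 x‖ ≤ M2 := hM2 x hxcb
      rw [Real.norm_eq_abs, abs_le] at this
      linarith [this.1]
    have hG2M2pos : 0 < G2 x + M2 := lt_of_lt_of_le (mul_pos hc' hRpos) hG2lb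
    -- Step D1 : K * (P * R) ≤ C₁ * (P * (G2 x + C₁))
    have hD1 : K * (P * R) ≤ C₁ * (P * (G2 x + C₁)) := by
      have e1 : K * (P * R) = (K / c') * (P * (c' * R)) := by
        field_simp
      rw [e1]
      calc (K / c') * (P * (c' * R)) ≤ (K / c') * (P * (G2 x + M2)) :=
            mul_le_mul_of_nonneg_left (mul_le_mul_of_nonneg_left hG2lb hP.le)
              (div_nonneg hK0.le hc'.le)
        _ ≤ C₁ * (P * (G2 x + M2)) :=
            mul_le_mul_of_nonneg_right hC₁Kc (by positivity)
        _ ≤ C₁ * (P * (G2 x + C₁)) := by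
            have : G2 x + M2 ≤ G2 x + C₁ := by linarith
            exact mul_le_mul_of_nonneg_left (mul_le_mul_of_nonneg_left this hP.le) hC₁0.le
    -- Step D2 : M1 ≤ P * (G2 x + C₁)
    have hD2 : M1 ≤ P * (G2 x + C₁) := by
      -- R ≥ δ^{-α}
      have hRδ : δ ^ (-α) ≤ R := by
        have h1 : δ ^ (-α) ≤ ‖x‖ ^ (-α) := by
          rw [Real.rpow_neg hδ0.le, Real.rpow_neg hr.le]
          exact inv_anti₀ (Real.rpow_pos_of_pos hr _)
            (Real.rpow_le_rpow hr.le hxδ.le hα.le)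
        have h2 : ‖x‖ ^ (-α) ≤ R :=
          Real.rpow_le_rpow_of_exponent_ge hr hr1.le (by linarith)
        linarith
      have hGC : c' * δ ^ (-α) ≤ G2 x + C₁ := by
        have : c' * δ ^ (-α) ≤ c' * R := mul_le_mul_of_nonneg_left hRδ hc'.le
        linarith
      have hPδ : P * δ ^ (-α) = δ ^ (-(α/2)) := by
        rw [hPdef, ← Real.rpow_add hδ0]; congr 1; ring
      -- δ^{α/2} < c'/(M1+1)
      have hsmall : P < c' / (M1 + 1) := by
        have hδlt : δ < (c' / (M1 + 1)) ^ (2/α) :=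
          lt_of_lt_of_le hδδ₀ (min_le_right _ _)
        have := Real.rpow_lt_rpow hδ0.le hδlt (half_pos hα)
        rwa [← Real.rpow_mul (le_of_lt (div_pos hc' (by linarith))),
          show (2/α) * (α/2) = 1 by field_simp, Real.rpow_one] at this
      have hM1c : P * (M1 + 1) < c' := by
        rw [← lt_div_iff₀ (by linarith : (0:ℝ) < M1 + 1)] at *
        exact hsmall
      calc M1 ≤ (M1 + 1) * (P * δ ^ (-(α/2))) := by
            have : P * δ ^ (-(α/2)) = 1 := by
              rw [hPdef, ← Real.rpow_add hδ0]; simp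
            rw [this]; linarith
        _ = P * ((M1 + 1) * δ ^ (-(α/2))) := by ring
        _ ≤ P * (c' * δ ^ (-α) * δ ^ (α/2) * δ ^ (-(α/2))) := by
            apply mul_le_mul_of_nonneg_left _ hP.le
            have hδneg : 0 < δ ^ (-(α/2)) := Real.rpow_pos_of_pos hδ0 _
            have e : c' * δ ^ (-α) * δ ^ (α/2) = c' * δ ^ (-(α/2)) := by
              rw [mul_assoc, ← Real.rpow_add hδ0]; congr 2; ring
            rw [e]
            apply mul_le_mul_of_nonneg_right _ hδneg.le
            -- M1 + 1 ≤ c' * δ^{-(α/2)} = c' / P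
            have : M1 + 1 < c' / P := (lt_div_iff₀ hP).mpr (by linarith [hM1c])
            have e2 : c' * δ ^ (-(α/2)) = c' / P := by
              rw [hPdef, Real.rpow_neg hδ0.le]; ring
            rw [e2]; linarith
        _ ≤ P * ((G2 x + C₁) * δ ^ (α/2) * δ ^ (-(α/2))) := by
            apply mul_le_mul_of_nonneg_left _ hP.le
            have hδneg : 0 ≤ δ ^ (-(α/2)) := (Real.rpow_pos_of_pos hδ0 _).le
            exact mul_le_mul_of_nonneg_right (mul_le_mul_of_nonneg_right hGC hP.le) hδneg
        _ = P * (G2 x + C₁) := by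
            rw [mul_assoc, ← Real.rpow_add hδ0]
            norm_num
    -- Conclusion
    have hχu := hχrange (δ⁻¹ • x)
    have hLHS : |g x - (1 - χ (δ⁻¹ • x)) * g x| ≤ |g x| := by
      have e : g x - (1 - χ (δ⁻¹ • x)) * g x = χ (δ⁻¹ • x) * g x := by ring
      rw [e, abs_mul]
      have : |χ (δ⁻¹ • x)| ≤ 1 := abs_le.mpr ⟨by linarith [hχu.1], hχu.2⟩
      calc |χ (δ⁻¹ • x)| * |g x| ≤ 1 * |g x| :=
            mul_le_mul_of_nonneg_right this (abs_nonneg _)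
        _ = |g x| := one_mul _
    have hfinal : |g x| ≤ (C₁ + 1) * P * (G2 x + (C₁ + 1)) := by
      have hGC₁ : 0 ≤ G2 x + C₁ := by
        have : c' * R ≤ G2 x + C₁ := by linarith [hG2lb]
        linarith [mul_pos hc' hRpos]
      calc |g x| ≤ K * (P * R) + M1 := hB1
        _ ≤ C₁ * (P * (G2 x + C₁)) + P * (G2 x + C₁) := add_le_add hD1 hD2
        _ = (C₁ + 1) * P * (G2 x + C₁) := by ring
        _ ≤ (C₁ + 1) * P * (G2 x + (C₁ + 1)) := by
            apply mul_le_mul_of_nonneg_left (by linarith) (by positivity)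
    exact le_trans hLHS hfinal
end
end
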